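/- arXiv:0804.1781 — 15 statements merged into one kernel-verified Lean document; each statement's English description precedes it below -/
import Mathlib

section
/- There exists an atomistic 2-ladder of cardinality ℵ₁; that is, a lower finite lattice of cardinality ℵ₁ in which every element has at most two lower covers and every element is a join of atoms. -/
noncomputable section
namespace DitorLadder
open Cardinal Set
open scoped Classical

abbrev I : Type := (Cardinal.aleph 1).ord.ToType

instance iwo : IsWellOrder I (· < ·) := isWellOrder_lt

theorem wfI : @WellFounded I (· < ·) := (inferInstance : WellFoundedLT I).wf

theorem card_Iio' (a : I) :
    #({y : I // y < a}) = (@Ordinal.typein I (· < ·) iwo a).card :=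
  @Ordinal.card_typein I (· < ·) iwo a

theorem typein_lt' (a : I) :
    (@Ordinal.typein I (· < ·) iwo a) < (Cardinal.aleph 1).ord :=
  Ordinal.typein_lt_self a

theorem countable_lt (a : I) : Countable {y : I // y < a} := by
  rw [← Cardinal.mk_le_aleph0_iff]
  have h3 := Cardinal.lt_ord.mp (typein_lt' a)
  have h4 : Cardinal.aleph 1 = Order.succ (Cardinal.aleph 0) := by
    simpa using Cardinal.aleph_succ 0
  have h5 := Order.lt_succ_iff.mp (lt_of_lt_of_eq h3 h4)
  rw [Cardinal.aleph_zero] at h5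
  exact le_trans (le_of_eq (card_Iio' a)) h5

theorem mkI : #I = Cardinal.aleph 1 := by
  rw [Cardinal.mk_toType, Cardinal.card_ord]

instance : Infinite I := by
  rw [Cardinal.infinite_iff, mkI]
  exact Cardinal.aleph0_le_aleph 1

/-- the tower over `α` built from a ladder `ℓ`. -/
def towerAux (ℓ : ℕ → Finset I) (α : I) : ℕ → Finset I
  | 0 => {α}
  | n + 1 => towerAux ℓ α n ∪ ℓ n

/-- `ℓ` is a good ladder at `α`, relative to the towers `T` below `α`. -/
def Good (α : I) (T : ∀ β : I, β < α → ℕ → Finset I) (ℓ : ℕ → Finset I) : Prop :=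
  (∀ n, ℓ n = ∅ ∨ ∃ β, ∃ h : β < α, ∃ m, ℓ n = T β h m) ∧
  (∀ n, ℓ n ⊆ ℓ (n + 1)) ∧
  (∀ β, (h : β < α) → ∀ m, ∃ n, T β h m ⊆ ℓ n)

/-- the ladder at `α`, chosen by recursion on `α`. -/
def L : I → ℕ → Finset I :=
  wfI.fix fun α ih =>
    if h : ∃ ℓ, Good α (fun β hb => towerAux (ih β hb) β) ℓ then h.choose else fun _ => ∅

/-- the tower at `α`. -/
def A (α : I) : ℕ → Finset I := towerAux (L α) α

theorem L_eq (α : I) :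
    L α = if h : ∃ ℓ, Good α (fun β _ => A β) ℓ then h.choose else fun _ => ∅ := by
  have := wfI.fix_eq (fun α ih =>
    if h : ∃ ℓ, Good α (fun β hb => towerAux (ih β hb) β) ℓ then h.choose else fun _ => ∅) α
  exact this

theorem A_zero (α : I) : A α 0 = {α} := rfl

theorem A_succ (α : I) (n : ℕ) : A α (n + 1) = A α n ∪ L α n := rfl

theorem A_mono (α : I) {m n : ℕ} (h : m ≤ n) : A α m ⊆ A α n := by
  induction n with
  | zero => simpa [Nat.le_zero.mp h] using Finset.Subset.refl _
  | succ n ih =>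
    rcases Nat.lt_or_ge m (n+1) with h'|h'
    · exact (ih (Nat.lt_succ_iff.mp h')).trans (by rw [A_succ]; exact Finset.subset_union_left)
    · have : m = n + 1 := le_antisymm h h'
      subst this; exact Finset.Subset.refl _

theorem L_good (α : I) (h : ∃ ℓ, Good α (fun β _ => A β) ℓ) :
    Good α (fun β _ => A β) (L α) := by
  rw [L_eq, dif_pos h]
  exact h.choose_spec

/-- Main induction: elements of towers are `≤ α`, and a good ladder exists. -/
theorem main (α : I) :
    (∀ n x, x ∈ A α n → x ≤ α) ∧ (∃ ℓ, Good α (fun β _ => A β) ℓ) := by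
  induction α using wfI.induction with
  | _ α IH =>
  have habs : ∀ β γ : I, β < γ → γ < α → ∀ m, ∃ n, A β m ⊆ A γ n := by
    intro β γ hβγ hγα m
    obtain ⟨n, hn⟩ := (L_good γ (IH γ hγα).2).2.2 β hβγ m
    exact ⟨n + 1, hn.trans (by rw [A_succ]; exact Finset.subset_union_right)⟩
  have hdir : ∀ β γ : I, β < α → γ < α → ∀ m j,
      ∃ δ, ∃ _ : δ < α, ∃ t, A β m ∪ A γ j ⊆ A δ t := by
    have base : ∀ β γ : I, β ≤ γ → γ < α → ∀ m j,
        ∃ δ, ∃ _ : δ < α, ∃ t, A β m ∪ A γ j ⊆ A δ t := by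
      intro β γ h hγ m j
      rcases lt_or_eq_of_le h with h' | h'
      · obtain ⟨n1, hn1⟩ := habs β γ h' hγ m
        exact ⟨γ, hγ, max n1 j, Finset.union_subset
          (hn1.trans (A_mono γ (le_max_left _ _))) (A_mono γ (le_max_right _ _))⟩
      · subst h'
        exact ⟨β, hγ, max m j, Finset.union_subset
          (A_mono β (le_max_left _ _)) (A_mono β (le_max_right _ _))⟩
    intro β γ hβ hγ m j
    rcases le_total β γ with h | h
    · exact base β γ h hγ m j
    · obtain ⟨δ, hδ, t, ht⟩ := base γ β h hβ j m
      exact ⟨δ, hδ, t, Finset.union_subset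
        ((Finset.subset_union_right).trans ht) ((Finset.subset_union_left).trans ht)⟩
  have hex : ∃ ℓ, Good α (fun β _ => A β) ℓ := by
    by_cases hne : ∃ β : I, β < α
    · obtain ⟨β₀, hβ₀⟩ := hne
      haveI : Countable {y : I // y < α} := countable_lt α
      haveI : Nonempty ({y : I // y < α} × ℕ) := ⟨⟨⟨β₀, hβ₀⟩, 0⟩⟩
      obtain ⟨g, hg⟩ := exists_surjective_nat ({y : I // y < α} × ℕ)
      have hstep : ∀ p q : {y : I // y < α} × ℕ, ∃ r : {y : I // y < α} × ℕ,
          A p.1.1 p.2 ∪ A q.1.1 q.2 ⊆ A r.1.1 r.2 := by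
        intro p q
        obtain ⟨δ, hδ, t, ht⟩ := hdir p.1.1 q.1.1 p.1.2 q.1.2 p.2 q.2
        exact ⟨(⟨δ, hδ⟩, t), ht⟩
      let d : ℕ → {y : I // y < α} × ℕ := fun n =>
        Nat.rec (g 0) (fun n pn => (hstep pn (g (n + 1))).choose) n
      have hd0 : d 0 = g 0 := rfl
      have hdsucc : ∀ n, A (d n).1.1 (d n).2 ∪ A (g (n + 1)).1.1 (g (n + 1)).2 ⊆
          A (d (n + 1)).1.1 (d (n + 1)).2 :=
        fun n => (hstep (d n) (g (n + 1))).choose_spec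
      refine ⟨fun n => A (d n).1.1 (d n).2, ?_, ?_, ?_⟩
      · intro n; exact Or.inr ⟨(d n).1.1, (d n).1.2, (d n).2, rfl⟩
      · intro n; exact (Finset.subset_union_left).trans (hdsucc n)
      · intro β h m
        obtain ⟨k, hk⟩ := hg (⟨β, h⟩, m)
        match k, hk with
        | 0, hk =>
          refine ⟨0, ?_⟩
          show A β m ⊆ A ((d 0).1 : I) (d 0).2
          rw [hd0, hk]
        | j + 1, hk =>
          refine ⟨j + 1, ?_⟩
          have h2 := (Finset.subset_union_right).trans (hdsucc j)
          rwa [hk] at h2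
    · push_neg at hne
      refine ⟨fun _ => ∅, fun n => Or.inl rfl, fun n => Finset.Subset.refl _, ?_⟩
      intro β h m
      exact absurd h (not_lt.mpr (hne β))
  refine ⟨?_, hex⟩
  have hgood := L_good α hex
  intro n
  induction n with
  | zero =>
    intro x hx
    rw [A_zero, Finset.mem_singleton] at hx
    exact le_of_eq hx
  | succ n ihn =>
    intro x hx
    rw [A_succ, Finset.mem_union] at hx
    rcases hx with hx | hx
    · exact ihn x hx
    · rcases hgood.1 n with h0 | ⟨β, hβ, m, h0⟩
      · rw [h0] at hx; simp at hx
      · rw [h0] at hx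
        exact le_of_lt (lt_of_le_of_lt ((IH β hβ).1 m x hx) hβ)

theorem mem_le {α : I} {n : ℕ} {x : I} (h : x ∈ A α n) : x ≤ α := (main α).1 n x h

theorem good (α : I) : Good α (fun β _ => A β) (L α) := L_good α (main α).2

theorem self_mem (α : I) (n : ℕ) : α ∈ A α n :=
  A_mono α (Nat.zero_le n) (by simp [A_zero])

theorem L_cases (α : I) (n : ℕ) : L α n = ∅ ∨ ∃ β, β < α ∧ ∃ m, L α n = A β m := by
  rcases (good α).1 n with h | ⟨β, hb, m, h⟩
  · exact Or.inl h
  · exact Or.inr ⟨β, hb, m, h⟩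

theorem L_mono (α : I) (n : ℕ) : L α n ⊆ L α (n + 1) := (good α).2.1 n

theorem abs {β α : I} (h : β < α) (m : ℕ) : ∃ n, A β m ⊆ A α n := by
  obtain ⟨n, hn⟩ := (good α).2.2 β h m
  exact ⟨n + 1, hn.trans (by rw [A_succ]; exact Finset.subset_union_right)⟩

theorem mem_L_lt {α : I} {n : ℕ} {x : I} (h : x ∈ L α n) : x < α := by
  rcases L_cases α n with h0 | ⟨β, hb, m, h0⟩
  · rw [h0] at h; simp at h
  · rw [h0] at h; exact lt_of_le_of_lt (mem_le h) hb

theorem A_succ_eq (α : I) (n : ℕ) : A α (n + 1) = {α} ∪ L α n := by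
  induction n with
  | zero => rfl
  | succ n ih =>
    rw [A_succ, ih]
    ext x
    simp only [Finset.mem_union, Finset.mem_singleton]
    constructor
    · rintro ((h | h) | h)
      exacts [Or.inl h, Or.inr (L_mono α n h), Or.inr h]
    · rintro (h | h)
      exacts [Or.inl (Or.inl h), Or.inr h]

/-- The key minimality ("trace") lemma. -/
theorem key : ∀ γ : I, ∀ (j : ℕ) (W : Finset I) (α : I) (k : ℕ),
    α ∈ W → W ⊆ A γ j → W ⊆ A α k → (∀ k', W ⊆ A α k' → k ≤ k') → A α k ⊆ A γ j := by
  intro γ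
  induction γ using wfI.induction with
  | _ γ IH =>
  intro j W α k hαW hWγ hWα hmin
  rcases eq_or_ne α γ with rfl | hne
  · exact A_mono α (hmin j hWγ)
  · have hαγ : α < γ := lt_of_le_of_ne (mem_le (hWγ hαW)) hne
    match j with
    | 0 =>
      have := hWγ hαW
      rw [A_zero, Finset.mem_singleton] at this
      exact absurd this hne
    | t + 1 =>
      have hγW : γ ∉ W := fun h => absurd (mem_le (hWα h)) (not_le.mpr hαγ)
      have hWL : W ⊆ L γ t := by
        intro x hx
        have hx2 := hWγ hx
        rw [A_succ_eq, Finset.mem_union, Finset.mem_singleton] at hx2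
        rcases hx2 with rfl | hx2
        · exact absurd hx hγW
        · exact hx2
      rcases L_cases γ t with h0 | ⟨δ, hδ, i, h0⟩
      · rw [h0] at hWL
        exact absurd (hWL hαW) (by simp)
      · rw [h0] at hWL
        have := IH δ hδ i W α k hαW hWL hWα hmin
        refine this.trans ?_
        rw [A_succ_eq, ← h0]
        exact Finset.subset_union_right

/-- membership predicate for the lattice -/
def FF (S : Finset I) : Prop := S = ∅ ∨ ∃ α n, S = A α n

theorem joinAux {α β : I} (hba : β ≤ α) (m n : ℕ) :
    ∃ U, FF U ∧ A α m ⊆ U ∧ A β n ⊆ U ∧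
      ∀ V, FF V → A α m ⊆ V → A β n ⊆ V → U ⊆ V := by
  have hex : ∃ k, A α m ∪ A β n ⊆ A α k := by
    rcases lt_or_eq_of_le hba with h | h
    · obtain ⟨k1, hk1⟩ := abs h n
      exact ⟨max m k1, Finset.union_subset (A_mono α (le_max_left _ _))
        (hk1.trans (A_mono α (le_max_right _ _)))⟩
    · subst h
      exact ⟨max m n, Finset.union_subset (A_mono β (le_max_left _ _))
        (A_mono β (le_max_right _ _))⟩
  classical
  set k0 := Nat.find hex with hk0
  refine ⟨A α k0, Or.inr ⟨α, k0, rfl⟩,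
    (Finset.subset_union_left).trans (Nat.find_spec hex),
    (Finset.subset_union_right).trans (Nat.find_spec hex), ?_⟩
  intro V hV h1 h2
  rcases hV with rfl | ⟨γ, j, rfl⟩
  · exact absurd (h1 (self_mem α m)) (by simp)
  · exact key γ j (A α m ∪ A β n) α k0
      (Finset.mem_union_left _ (self_mem α m))
      (Finset.union_subset h1 h2)
      (Nat.find_spec hex)
      (fun k' hk' => Nat.find_min' hex hk')

theorem joinEx (S T : Finset I) (hS : FF S) (hT : FF T) :
    ∃ U, FF U ∧ S ⊆ U ∧ T ⊆ U ∧ ∀ V, FF V → S ⊆ V → T ⊆ V → U ⊆ V := by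
  rcases hS with rfl | ⟨α, m, rfl⟩
  · exact ⟨T, hT, Finset.empty_subset _, Finset.Subset.refl _,
      fun V _ _ h2 => h2⟩
  rcases hT with rfl | ⟨β, n, rfl⟩
  · exact ⟨A α m, Or.inr ⟨α, m, rfl⟩, Finset.Subset.refl _, Finset.empty_subset _,
      fun V _ h1 _ => h1⟩
  rcases le_total β α with h | h
  · exact joinAux h m n
  · obtain ⟨U, h1, h2, h3, h4⟩ := joinAux h n m
    exact ⟨U, h1, h3, h2, fun V hV hV1 hV2 => h4 V hV hV2 hV1⟩

/-- The lattice. -/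
def K : Type := {S : Finset I // FF S}

instance : PartialOrder K := Subtype.partialOrder _

theorem K_le_iff {x y : K} : x ≤ y ↔ x.val ⊆ y.val := by
  rw [← Finset.le_iff_subset]; rfl

instance : OrderBot K where
  bot := ⟨∅, Or.inl rfl⟩
  bot_le x := K_le_iff.mpr (Finset.empty_subset _)

instance : SemilatticeSup K where
  sup x y := ⟨(joinEx x.val y.val x.2 y.2).choose, (joinEx x.val y.val x.2 y.2).choose_spec.1⟩
  le_sup_left x y := K_le_iff.mpr (joinEx x.val y.val x.2 y.2).choose_spec.2.1
  le_sup_right x y := K_le_iff.mpr (joinEx x.val y.val x.2 y.2).choose_spec.2.2.1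
  sup_le x y z hxz hyz := K_le_iff.mpr
    ((joinEx x.val y.val x.2 y.2).choose_spec.2.2.2 z.val z.2
      (K_le_iff.mp hxz) (K_le_iff.mp hyz))

theorem finite_Iic (x : K) : (Set.Iic x).Finite := by
  have hsub : Set.Iic x ⊆ Subtype.val ⁻¹' {s : Finset I | s ⊆ x.val} :=
    fun y hy => K_le_iff.mp hy
  refine Set.Finite.subset (Set.Finite.preimage
    (Set.injOn_of_injective Subtype.val_injective) ?_) hsub
  have : {s : Finset I | s ⊆ x.val} = ↑(x.val.powerset) := by
    ext s; simp [Finset.mem_powerset]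
  rw [this]
  exact (x.val.powerset).finite_toSet

def lowerFin (x y : K) : Set.Finite {z : K | z ≤ x ∧ z ≤ y} :=
  (finite_Iic x).subset (fun z hz => hz.1)

instance : Lattice K :=
  { (inferInstance : SemilatticeSup K) with
    inf := fun x y => (lowerFin x y).toFinset.sup id
    inf_le_left := fun x y => Finset.sup_le
      (fun z hz => ((Set.Finite.mem_toFinset _).mp hz).1)
    inf_le_right := fun x y => Finset.sup_le
      (fun z hz => ((Set.Finite.mem_toFinset _).mp hz).2)
    le_inf := fun x y z h1 h2 =>
      Finset.le_sup (f := id) ((Set.Finite.mem_toFinset _).mpr ⟨h1, h2⟩) }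

def atomElem (β : I) : K := ⟨{β}, Or.inr ⟨β, 0, rfl⟩⟩

theorem isAtom_atomElem (β : I) : IsAtom (atomElem β) := by
  constructor
  · intro h
    have h2 := congrArg Subtype.val h
    have h3 : ({β} : Finset I) = (∅ : Finset I) := h2
    simp at h3
  · intro b hb
    have hsub : b.val ⊆ {β} := K_le_iff.mp hb.le
    have hne : b.val ≠ {β} := fun h => hb.ne (Subtype.ext h)
    have hb0 : b.val = ∅ := by
      rcases Finset.subset_singleton_iff.mp hsub with h | h
      exacts [h, absurd h hne]
    exact Subtype.ext hb0

theorem atomistic (x : K) :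
    ∃ s : Finset K, (∀ a ∈ s, IsAtom a) ∧ x = s.sup id := by
  classical
  refine ⟨x.val.image atomElem, ?_, ?_⟩
  · intro a ha
    obtain ⟨β, _, rfl⟩ := Finset.mem_image.mp ha
    exact isAtom_atomElem β
  · apply le_antisymm
    · rw [K_le_iff]
      intro β hβ
      have h1 : atomElem β ≤ (x.val.image atomElem).sup id :=
        Finset.le_sup (f := id) (Finset.mem_image_of_mem _ hβ)
      exact K_le_iff.mp h1 (Finset.mem_singleton_self β)
    · apply Finset.sup_le
      intro a ha
      obtain ⟨β, hβ, rfl⟩ := Finset.mem_image.mp ha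
      exact K_le_iff.mpr (Finset.singleton_subset_iff.mpr hβ)

theorem covers_le (y : K) : {x : K | x ⋖ y}.ncard ≤ 2 := by
  classical
  rcases y.2 with h0 | ⟨α, n, hA⟩
  · have hempty : {x : K | x ⋖ y} = ∅ := by
      ext x
      simp only [mem_setOf_eq, Set.mem_empty_iff_false, iff_false]
      intro hc
      have hsub := K_le_iff.mp hc.1.le
      rw [h0] at hsub
      have hxv : x.val = y.val := (Finset.subset_empty.mp hsub).trans h0.symm
      exact hc.1.ne (Subtype.ext hxv)
    rw [hempty]
    simp
  · -- uniqueness within each class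
    have hval : ∀ x : K, x ⋖ y → α ∈ x.val → ∃ j, x.val = A α j := by
      intro x hc hm
      rcases x.2 with h0 | ⟨γ, j, hg⟩
      · rw [h0] at hm; simp at hm
      · have h1 : α ≤ γ := mem_le (hg ▸ hm)
        have h2 : γ ≤ α := by
          have : γ ∈ x.val := hg ▸ self_mem γ j
          exact mem_le (by have := K_le_iff.mp hc.1.le this; rwa [hA] at this)
        exact ⟨j, by rw [hg, le_antisymm h2 h1]⟩
    have huniq : ∀ x1 x2 : K, x1 ⋖ y → x2 ⋖ y →
        ((α ∈ x1.val) ↔ (α ∈ x2.val)) → x1 = x2 := by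
      intro x1 x2 hc1 hc2 hiff
      by_cases hm : α ∈ x1.val
      · obtain ⟨j1, hj1⟩ := hval x1 hc1 hm
        obtain ⟨j2, hj2⟩ := hval x2 hc2 (hiff.mp hm)
        have hcmp : x1 ≤ x2 ∨ x2 ≤ x1 := by
          rcases le_total j1 j2 with h | h
          · exact Or.inl (K_le_iff.mpr (by rw [hj1, hj2]; exact A_mono α h))
          · exact Or.inr (K_le_iff.mpr (by rw [hj1, hj2]; exact A_mono α h))
        rcases hcmp with h | h
        · rcases lt_or_eq_of_le h with h' | h'
          · exact absurd hc2.lt (hc1.2 h')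
          · exact h'
        · rcases lt_or_eq_of_le h with h' | h'
          · exact absurd hc1.lt (hc2.2 h')
          · exact h'.symm
      · have hm2 : α ∉ x2.val := fun h => hm (hiff.mpr h)
        match n, hA with
        | 0, hA =>
          have e1 : x1.val = ∅ := by
            have h1 := K_le_iff.mp hc1.1.le
            rw [hA, A_zero] at h1
            rcases Finset.subset_singleton_iff.mp h1 with h | h
            exacts [h, absurd (h ▸ Finset.mem_singleton_self α) hm]
          have e2 : x2.val = ∅ := by
            have h1 := K_le_iff.mp hc2.1.le
            rw [hA, A_zero] at h1
            rcases Finset.subset_singleton_iff.mp h1 with h | h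
            exacts [h, absurd (h ▸ Finset.mem_singleton_self α) hm2]
          exact Subtype.ext (e1.trans e2.symm)
        | m + 1, hA =>
          have hFFL : FF (L α m) := by
            rcases L_cases α m with h | ⟨β, _, i, h⟩
            exacts [Or.inl h, Or.inr ⟨β, i, h⟩]
          set M2 : K := ⟨L α m, hFFL⟩ with hM2
          have hM2y : M2 < y := by
            constructor
            · apply K_le_iff.mpr
              rw [hA, A_succ_eq]
              exact Finset.subset_union_right
            · intro hle
              have := K_le_iff.mp hle
              rw [hA] at this
              have hαL : α ∈ L α m := this (self_mem α (m + 1))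
              exact absurd (mem_L_lt hαL) (lt_irrefl α)
          have hbel : ∀ x : K, x ⋖ y → α ∉ x.val → x ≤ M2 := by
            intro x hc hm
            apply K_le_iff.mpr
            intro z hz
            have h1 := K_le_iff.mp hc.1.le hz
            rw [hA, A_succ_eq, Finset.mem_union, Finset.mem_singleton] at h1
            rcases h1 with rfl | h1
            exacts [absurd hz hm, h1]
          have e1 : x1 = M2 := by
            rcases lt_or_eq_of_le (hbel x1 hc1 hm) with h' | h'
            · exact absurd hM2y (hc1.2 h')
            · exact h'
          have e2 : x2 = M2 := by
            rcases lt_or_eq_of_le (hbel x2 hc2 hm2) with h' | h'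
            · exact absurd hM2y (hc2.2 h')
            · exact h'
          exact e1.trans e2.symm
    -- now count
    have hcount : ∀ c1 c2 : K, {x : K | x ⋖ y} ⊆ {c1, c2} → {x : K | x ⋖ y}.ncard ≤ 2 := by
      intro c1 c2 hsub
      refine le_trans (Set.ncard_le_ncard hsub
        ((Set.finite_singleton c2).insert c1)) ?_
      exact le_trans (Set.ncard_insert_le _ _) (by simp)
    by_cases h1 : ∃ x : K, x ⋖ y ∧ α ∈ x.val
    · by_cases h2 : ∃ x : K, x ⋖ y ∧ α ∉ x.val
      · refine hcount h1.choose h2.choose ?_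
        intro x hx
        simp only [Set.mem_insert_iff, Set.mem_singleton_iff]
        by_cases hm : α ∈ x.val
        · exact Or.inl (huniq x h1.choose hx h1.choose_spec.1
            (by simp [hm, h1.choose_spec.2]))
        · exact Or.inr (huniq x h2.choose hx h2.choose_spec.1
            (by simp [hm, h2.choose_spec.2]))
      · refine hcount h1.choose h1.choose ?_
        intro x hx
        simp only [Set.mem_insert_iff, Set.mem_singleton_iff]
        by_cases hm : α ∈ x.val
        · exact Or.inl (huniq x h1.choose hx h1.choose_spec.1
            (by simp [hm, h1.choose_spec.2]))
        · exact absurd ⟨x, hx, hm⟩ h2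
    · by_cases h2 : ∃ x : K, x ⋖ y ∧ α ∉ x.val
      · refine hcount h2.choose h2.choose ?_
        intro x hx
        simp only [Set.mem_insert_iff, Set.mem_singleton_iff]
        by_cases hm : α ∈ x.val
        · exact absurd ⟨x, hx, hm⟩ h1
        · exact Or.inr (huniq x h2.choose hx h2.choose_spec.1
            (by simp [hm, h2.choose_spec.2]))
      · have hempty : {x : K | x ⋖ y} = ∅ := by
          ext x
          simp only [mem_setOf_eq, Set.mem_empty_iff_false, iff_false]
          intro hc
          by_cases hm : α ∈ x.val
          · exact h1 ⟨x, hc, hm⟩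
          · exact h2 ⟨x, hc, hm⟩
        rw [hempty]
        simp

theorem mkK : #K = Cardinal.aleph 1 := by
  apply le_antisymm
  · calc #K ≤ #(Finset I) := Cardinal.mk_le_of_injective Subtype.val_injective
      _ = #I := Cardinal.mk_finset_of_infinite I
      _ = _ := mkI
  · rw [← mkI]
    refine Cardinal.mk_le_of_injective (f := atomElem) ?_
    intro a b h
    have : ({a} : Finset I) = {b} := congrArg Subtype.val h
    simpa using this

end DitorLadder


/-- There exists an atomistic 2-ladder of cardinality ℵ₁: a lower finite lattice with zero,
of cardinality ℵ₁, in which every element has at most two lower covers and every element is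
a join of atoms. -/
theorem stmt_1 :
    ∃ (K : Type) (_ : Lattice K) (_ : OrderBot K),
      (∀ p : K, (Set.Iic p).Finite) ∧
      (∀ y : K, Set.ncard {x : K | x ⋖ y} ≤ 2) ∧
      (∀ x : K, ∃ s : Finset K, (∀ a ∈ s, IsAtom a) ∧ x = s.sup id) ∧
      Cardinal.mk K = Cardinal.aleph 1 := by
  exact ⟨DitorLadder.K, inferInstance, inferInstance,
    DitorLadder.finite_Iic, DitorLadder.covers_le, DitorLadder.atomistic, DitorLadder.mkK⟩
end
end

section
/- Every k-ladder has breadth at most k. -/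
/-!
Suppose no `x i ≤ y i`, and let `z` be the join of all the `x i`. Then `z ⊓ y i < z` for every
`i`, so each `z ⊓ y i` lies below some lower cover `c i` of `z`. There are more indices than lower
covers of `z`, so `c i = c j` for some `i ≠ j`. But every `x m` lies below `z ⊓ y i` or below
`z ⊓ y j`, hence below `c i`, which forces `z ≤ c i < z`.
-/

theorem IsStronglyCoatomic.of_finite_Iic {α : Type*} [Preorder α]
    (h : ∀ a : α, (Set.Iic a).Finite) : IsStronglyCoatomic α :=
  letI := LocallyFiniteOrder.ofFiniteIcc fun _ b => (h b).subset Set.Icc_subset_Iic_self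
  inferInstance

theorem exists_le_apply_of_ncard_covBy_lt {ι K : Type*} [Fintype ι] [Nonempty ι] [Lattice K]
    (hLF : ∀ p : K, (Set.Iic p).Finite)
    (hcov : ∀ z : K, {c : K | c ⋖ z}.ncard < Fintype.card ι)
    (x y : ι → K) (hxy : ∀ i j, i ≠ j → x i ≤ y j) : ∃ i, x i ≤ y i := by
  have := IsStronglyCoatomic.of_finite_Iic hLF
  by_contra! hxy_self
  set z := Finset.univ.sup' Finset.univ_nonempty x
  have hxz (m : ι) : x m ≤ z := Finset.le_sup' x (Finset.mem_univ m)
  have hx_le_inf {m l : ι} (hml : m ≠ l) : x m ≤ z ⊓ y l := le_inf (hxz m) (hxy m l hml)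
  have hinf_lt (i : ι) : z ⊓ y i < z :=
    inf_lt_left.2 fun hzy => hxy_self i ((hxz i).trans hzy)
  choose c hc hcz using fun i => exists_le_covBy_of_lt (hinf_lt i)
  have hcard : {c | c ⋖ z}.ncard < (Set.univ : Set ι).ncard := by
    rw [Set.ncard_univ, Nat.card_eq_fintype_card]
    exact hcov z
  obtain ⟨i, -, j, -, hij, hcij⟩ := Set.exists_ne_map_eq_of_ncard_lt_of_maps_to hcard
    (fun i _ => hcz i) ((hLF z).subset fun _ => CovBy.le)
  have hzc : z ≤ c i := Finset.sup'_le _ _ fun m _ => by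
    rcases eq_or_ne m i with rfl | hmi
    · exact (hx_le_inf hij).trans (hcij ▸ hc j)
    · exact (hx_le_inf hmi).trans (hc i)
  exact (hcz i).lt.not_ge hzc

theorem stmt_2_general (k : ℕ) (K : Type*) [Lattice K]
    (hLF : ∀ p : K, (Set.Iic p).Finite)
    (hcov : ∀ y : K, Set.ncard {x : K | x ⋖ y} ≤ k) :
    ∀ x y : Fin (k + 1) → K, (∀ i j, i ≠ j → x i ≤ y j) → ∃ i, x i ≤ y i :=
  exists_le_apply_of_ncard_covBy_lt hLF fun z => by simpa [Nat.lt_succ_iff] using hcov z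

/-- Every k-ladder (a lower finite lattice in which every element has at most k lower covers)
has breadth at most k: for all x₀,…,x_k and y₀,…,y_k, if xᵢ ≤ yⱼ whenever i ≠ j,
then xᵢ ≤ yᵢ for some i. -/
theorem stmt_2 (k : ℕ) (hk : 0 < k) (K : Type*) [Lattice K]
    (hLF : ∀ p : K, (Set.Iic p).Finite)
    (hcov : ∀ y : K, Set.ncard {x : K | x ⋖ y} ≤ k) :
    ∀ x y : Fin (k + 1) → K, (∀ i j, i ≠ j → x i ≤ y j) → ∃ i, x i ≤ y i :=
  stmt_2_general k K hLF hcov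
end

section
/- Every lower finite lattice of breadth at most k has cardinality at most ℵ_{k-1}. -/
open Cardinal Set

universe u
variable {α : Type u}

-- cardinality of finsets contained in a set
lemma mk_finset_subset_le (T : Set α) :
    #{A : Finset α // ↑A ⊆ T} ≤ max ℵ₀ #T := by
  classical
  have hsurj : Function.Surjective
      (fun B : Finset T => (⟨B.map (Function.Embedding.subtype _), by
        intro x hx
        simp only [Finset.coe_map, Function.Embedding.coe_subtype, Set.mem_image] at hx
        obtain ⟨⟨y, hy⟩, _, rfl⟩ := hx
        exact hy⟩ : {A : Finset α // ↑A ⊆ T})) := by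
    rintro ⟨A, hA⟩
    refine ⟨A.subtype (· ∈ T), ?_⟩
    ext1
    exact Finset.subtype_map_of_mem (fun x hx => hA hx)
  refine le_trans (mk_le_of_surjective hsurj) ?_
  rcases finite_or_infinite ↥T with h | h
  · haveI := Fintype.ofFinite ↥T
    exact le_max_of_le_left (lt_aleph0_of_finite (Finset ↥T)).le
  · rw [mk_finset_of_infinite]
    exact le_max_right _ _

lemma exists_closed (S : Set α) (f : Finset α → Set α) (hf : ∀ A, (f A).Finite)
    (c : Cardinal.{u}) (hc : ℵ₀ ≤ c) (hcS : c ≤ #S) :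
    ∃ Y : Set α, Y ⊆ S ∧ c ≤ #Y ∧ #Y ≤ c ∧
      ∀ A : Finset α, ↑A ⊆ Y → f A ∩ S ⊆ Y := by
  classical
  obtain ⟨T₀, hT₀S, hT₀⟩ := le_mk_iff_exists_subset.1 hcS
  set step : Set α → Set α :=
    fun T => T ∪ ⋃ A : {A : Finset α // ↑A ⊆ T}, (f A.1 ∩ S) with hstep
  set F : ℕ → Set α := fun n => Nat.rec T₀ (fun _ T => step T) n with hF
  have hFsucc : ∀ n, F (n + 1) = step (F n) := fun n => rfl
  have hmono : Monotone F := by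
    apply monotone_nat_of_le_succ
    intro n
    rw [hFsucc]
    exact Set.subset_union_left
  have hFS : ∀ n, F n ⊆ S := by
    intro n
    induction n with
    | zero => exact hT₀S
    | succ n ih =>
      rw [hFsucc]
      apply Set.union_subset ih
      exact Set.iUnion_subset fun A => Set.inter_subset_right
  have hcard : ∀ n, #(F n) ≤ c := by
    intro n
    induction n with
    | zero => exact hT₀.le
    | succ n ih =>
      rw [hFsucc]
      refine le_trans (mk_union_le _ _) ?_
      have h1 : #(⋃ A : {A : Finset α // ↑A ⊆ F n}, (f A.1 ∩ S)) ≤ c * ℵ₀ := by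
        refine le_trans (mk_iUnion_le _) ?_
        apply mul_le_mul'
        · exact le_trans (mk_finset_subset_le _) (max_le hc ih)
        · exact ciSup_le' fun A => ((hf A.1).inter_of_left S).lt_aleph0.le
      have h2 : c * ℵ₀ ≤ c := by
        rw [mul_aleph0_eq hc]
      calc #(F n) + #(⋃ A : {A : Finset α // ↑A ⊆ F n}, (f A.1 ∩ S))
          ≤ c + c := add_le_add ih (le_trans h1 h2)
        _ = c := add_eq_self hc
  refine ⟨⋃ n, F n, Set.iUnion_subset hFS, ?_, ?_, ?_⟩
  · rw [← hT₀]
    exact mk_le_mk_of_subset (Set.subset_iUnion F 0)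
  · have : (⋃ n, F n) = ⋃ i : ULift.{u} ℕ, F i.down := by
      ext x; simp [ULift.exists]
    rw [this]
    refine le_trans (mk_iUnion_le _) ?_
    have : #(ULift.{u} ℕ) = ℵ₀ := mk_denumerable _
    rw [this]
    calc ℵ₀ * ⨆ i : ULift.{u} ℕ, #(F i.down) ≤ ℵ₀ * c := by
          exact mul_le_mul' le_rfl (ciSup_le' fun i => hcard i.down)
      _ = c := aleph0_mul_eq hc
  · intro A hA
    have hex : ∀ a : A, ∃ n, (a : α) ∈ F n := by
      rintro ⟨a, ha⟩
      simpa using hA ha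
    choose g hg using hex
    set N := A.attach.sup g with hN
    have hAF : ↑A ⊆ F N := by
      intro a ha
      exact hmono (Finset.le_sup (Finset.mem_attach _ ⟨a, ha⟩)) (hg ⟨a, ha⟩)
    intro x hx
    apply Set.subset_iUnion F (N + 1)
    rw [hFsucc]
    exact Set.subset_union_right (Set.subset_iUnion
      (fun A' : {A' : Finset α // ↑A' ⊆ F N} => f A'.1 ∩ S) ⟨A, hAF⟩ hx)

lemma kuratowski_free (n : ℕ) (S : Set α) (f : Finset α → Set α)
    (hf : ∀ A, (f A).Finite) (hS : Cardinal.aleph n ≤ #S) :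
    ∃ B : Finset α, ↑B ⊆ S ∧ B.card = n + 1 ∧
      ∀ A : Finset α, A ⊆ B → ∀ x ∈ B, x ∉ A → x ∉ f A := by
  classical
  induction n generalizing S f with
  | zero =>
    have hSinf : S.Infinite := by
      rw [← Set.infinite_coe_iff, ← aleph0_le_mk_iff]
      simpa using hS
    obtain ⟨x, hx⟩ := (hSinf.diff (hf ∅)).nonempty
    refine ⟨{x}, by simpa using hx.1, by simp, ?_⟩
    intro A hA y hy hyA
    rcases Finset.subset_singleton_iff.1 hA with rfl | rfl
    · have : y = x := by simpa using hy
      subst this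
      exact hx.2
    · exact absurd (by simpa using hy) (by simpa using hyA)
  | succ n ih =>
    have hSn : Cardinal.aleph n ≤ #S := by
      refine le_trans ?_ hS
      rw [aleph_le_aleph]
      exact_mod_cast Nat.le_succ n
    obtain ⟨Y, hYS, hYge, hYle, hYcl⟩ :=
      exists_closed S f hf (Cardinal.aleph n) (aleph0_le_aleph _) hSn
    have hns : ¬ (S ⊆ Y) := by
      intro h
      have h1 : #S ≤ Cardinal.aleph n := le_trans (mk_le_mk_of_subset h) hYle
      have h2 : Cardinal.aleph n < Cardinal.aleph (n + 1 : ℕ) := by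
        rw [aleph_lt_aleph]
        exact_mod_cast Nat.lt_succ_self n
      exact absurd (le_trans hS h1) (not_le.2 h2)
    obtain ⟨b, hbS, hbY⟩ := Set.not_subset.1 hns
    set f' : Finset α → Set α := fun A => f A ∪ f (insert b A) with hf'
    obtain ⟨B', hB'Y, hB'card, hB'free⟩ :=
      ih Y f' (fun A => (hf A).union (hf _)) hYge
    have hbB' : b ∉ B' := fun h => hbY (hB'Y h)
    refine ⟨insert b B', ?_, ?_, ?_⟩
    · intro y hy
      rcases Finset.mem_insert.1 (by simpa using hy) with rfl | h
      · exact hbS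
      · exact hYS (hB'Y h)
    · rw [Finset.card_insert_of_notMem hbB', hB'card]
    · intro A hA x hx hxA
      by_cases hbA : b ∈ A
      · set A' := A.erase b with hA'def
        have hA'B : A' ⊆ B' := by
          intro y hy
          rcases Finset.mem_insert.1 (hA (Finset.mem_of_mem_erase hy)) with rfl | h
          · exact absurd rfl (Finset.ne_of_mem_erase hy)
          · exact h
        have hxb : x ≠ b := fun e => hxA (e ▸ hbA)
        have hxB' : x ∈ B' := (Finset.mem_insert.1 hx).resolve_left hxb
        have hxA' : x ∉ A' := fun h => hxA (Finset.mem_of_mem_erase h)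
        have hfree := hB'free A' hA'B x hxB' hxA'
        intro hxf
        apply hfree
        rw [hf']
        exact Or.inr (by rwa [Finset.insert_erase hbA])
      · have hAB' : A ⊆ B' := by
          intro y hy
          rcases Finset.mem_insert.1 (hA hy) with rfl | h
          · exact absurd hy hbA
          · exact h
        rcases Finset.mem_insert.1 hx with rfl | hxB'
        · intro hbf
          exact hbY (hYcl A (Set.Subset.trans (by exact_mod_cast hAB') hB'Y) ⟨hbf, hbS⟩)
        · have hfree := hB'free A hAB' x hxB' hxA
          intro hxf
          exact hfree (Or.inl hxf)

/-- Every lower finite lattice of breadth at most k has cardinality at most ℵ_{k-1}. -/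
theorem stmt_3 (k : ℕ) (hk : 0 < k) (K : Type*) [Lattice K]
    (hLF : ∀ p : K, (Set.Iic p).Finite)
    (hbr : ∀ X : Finset K, X.Nonempty → ∃ Y : Finset K, Y ⊆ X ∧ Y.Nonempty ∧ Y.card ≤ k ∧
        ∀ (hX : X.Nonempty) (hY : Y.Nonempty), X.sup' hX id = Y.sup' hY id) :
    Cardinal.mk K ≤ Cardinal.aleph (k - 1) := by
  classical
  by_contra h
  have hK : Cardinal.aleph k ≤ #K := by
    have h1 := Order.succ_le_of_lt (not_le.1 h)
    rw [← aleph_succ] at h1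
    have hcast : ((k : Ordinal)) = Order.succ ((k : Ordinal) - 1) := by
      have h2 : ((k : Ordinal) - 1) = ((k - 1 : ℕ) : Ordinal) := by
        rw [Ordinal.natCast_sub, Nat.cast_one]
      rw [h2, ← Ordinal.add_one_eq_succ]
      norm_cast
      omega
    rw [hcast]
    exact h1
  set f : Finset K → Set K :=
    fun A => if h : A.Nonempty then Set.Iic (A.sup' h id) else ∅ with hfdef
  have hf : ∀ A, (f A).Finite := by
    intro A
    simp only [hfdef]
    split
    · exact hLF _
    · exact Set.finite_empty
  have hSK : Cardinal.aleph k ≤ #(Set.univ : Set K) := by rwa [mk_univ]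
  obtain ⟨B, -, hBcard, hBfree⟩ := kuratowski_free k Set.univ f hf hSK
  have hB : B.Nonempty := Finset.card_pos.1 (by omega)
  obtain ⟨Y, hYB, hYne, hYcard, hsup⟩ := hbr B hB
  have hYssub : Y ⊂ B := by
    refine lt_of_le_of_ne hYB ?_
    intro e
    rw [e] at hYcard
    omega
  obtain ⟨x, hxB, hxY⟩ := Finset.exists_of_ssubset hYssub
  set A := B.erase x with hAdef
  have hAB : A ⊆ B := Finset.erase_subset _ _
  have hxA : x ∉ A := Finset.notMem_erase _ _
  have hAne : A.Nonempty := by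
    apply Finset.card_pos.1
    rw [hAdef, Finset.card_erase_of_mem hxB, hBcard]
    omega
  have hfree := hBfree A hAB x hxB hxA
  apply hfree
  simp only [hfdef, dif_pos hAne]
  have h1 : x ≤ B.sup' hB id := Finset.le_sup' id hxB
  rw [hsup hB hYne] at h1
  have h2 : Y.sup' hYne id ≤ A.sup' hAne id := by
    apply Finset.sup'_le
    intro y hy
    have hyA : y ∈ A := Finset.mem_erase.2 ⟨fun e => hxY (e ▸ hy), hYB hy⟩
    exact Finset.le_sup' id hyA
  exact le_trans h1 h2
end

section
/- Let K be an infinite, lower finite lattice. Then the product lattice K × ω (with componentwise order, where ω is the chain of natural numbers) has a cofinal meet-subsemilattice isomorphic to K. Concretely, if (aₙ) is a strictly increasing sequence in K and f(x) is the largest n with aₙ ≤ x, then the graph {(x, f(x)) : x ∈ K} is such a subsemilattice. -/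
/-- Let K be an infinite lower finite lattice, (aₙ) a strictly increasing sequence in K, and
f(x) the largest n with aₙ ≤ x. Then the graph {(x, f(x)) : x ∈ K} is a cofinal
meet-subsemilattice of K × ω isomorphic to K. -/
theorem stmt_4 (K : Type*) [Lattice K] [Infinite K]
    (hLF : ∀ p : K, (Set.Iic p).Finite)
    (a : ℕ → K) (ha : StrictMono a)
    (f : K → ℕ)
    (hf : ∀ x : K, a (f x) ≤ x ∧ ∀ n : ℕ, a n ≤ x → n ≤ f x) :
    (∀ q : K × ℕ, ∃ x : K, q ≤ (x, f x)) ∧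
    (∀ x y : K, ((x, f x) : K × ℕ) ⊓ (y, f y) ∈ {p : K × ℕ | p.2 = f p.1}) ∧
    Nonempty (K ≃o {p : K × ℕ | p.2 = f p.1}) := by
  have hmono : ∀ {u v : K}, u ≤ v → f u ≤ f v := by
    intro u v huv
    exact (hf v).2 _ ((hf u).1.trans huv)
  refine ⟨?_, ?_, ?_⟩
  · intro q
    refine ⟨q.1 ⊔ a q.2, le_sup_left, ?_⟩
    exact (hf _).2 _ le_sup_right
  · intro x y
    show min (f x) (f y) = f (x ⊓ y)
    refine le_antisymm ?_ (le_min (hmono inf_le_left) (hmono inf_le_right))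
    refine (hf _).2 _ (le_inf ?_ ?_)
    · exact (ha.monotone (min_le_left _ _)).trans (hf x).1
    · exact (ha.monotone (min_le_right _ _)).trans (hf y).1
  · refine ⟨{ toFun := fun x => ⟨(x, f x), rfl⟩
              invFun := fun p => p.1.1
              left_inv := fun x => rfl
              right_inv := ?_
              map_rel_iff' := ?_ }⟩
    · rintro ⟨⟨x, n⟩, hn⟩
      simp only [Set.mem_setOf_eq] at hn
      simp [hn]
    · intro u v
      constructor
      · intro h
        exact h.1
      · intro h
        exact ⟨h, hmono h⟩
end

section
/- Every infinite lower finite lattice K contains a strictly increasing ω-sequence (aₙ), and for each element x of K there is a largest natural number n such that aₙ ≤ x; moreover the map sending x to that largest n is a meet-homomorphism from K to ω. -/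
/-- Every infinite lower finite lattice contains a strictly increasing ω-sequence (aₙ) such
that for each element x there is a largest natural number n with aₙ ≤ x; moreover the map
x ↦ that largest n is a meet-homomorphism to ω. -/
theorem stmt_5 (K : Type*) [Lattice K] [Infinite K]
    (hLF : ∀ p : K, (Set.Iic p).Finite) :
    ∃ a : ℕ → K, StrictMono a ∧ ∃ f : K → ℕ,
      (∀ x : K, a (f x) ≤ x ∧ ∀ n : ℕ, a n ≤ x → n ≤ f x) ∧
      (∀ x y : K, f (x ⊓ y) = min (f x) (f y)) := by
  classical
  obtain ⟨x₀⟩ := (inferInstance : Nonempty K)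
  have hx₀ : x₀ ∈ (hLF x₀).toFinset := by simp
  set b := (hLF x₀).toFinset.inf' ⟨x₀, hx₀⟩ id with hb
  have hbot : ∀ y : K, b ≤ y := by
    intro y
    have h1 : b ≤ x₀ ⊓ y := Finset.inf'_le id (by simp)
    exact h1.trans inf_le_right
  have hsucc : ∀ p : K, ∃ q : K, p < q := by
    intro p
    obtain ⟨y, hy⟩ := (hLF p).infinite_compl.nonempty
    exact ⟨p ⊔ y, left_lt_sup.2 fun h => hy h⟩
  choose s hs using hsucc
  set a : ℕ → K := fun n => Nat.rec b (fun _ q => s q) n with haa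
  have ha : StrictMono a := strictMono_nat_of_lt_succ (fun n => hs (a n))
  have ha0 : a 0 = b := rfl
  refine ⟨a, ha, ?_⟩
  -- the set of indices n with a n ≤ x, as a finset
  set S : K → Finset ℕ := fun x => ((hLF x).preimage ha.injective.injOn).toFinset with hS
  have hmemS : ∀ x n, n ∈ S x ↔ a n ≤ x := by intro x n; simp [hS]
  have hSne : ∀ x : K, (S x).Nonempty := fun x => ⟨0, (hmemS x 0).2 (ha0 ▸ hbot x)⟩
  set f : K → ℕ := fun x => (S x).max' (hSne x) with hf
  have hfa : ∀ x, a (f x) ≤ x := fun x => (hmemS x _).1 ((S x).max'_mem (hSne x))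
  have hfmax : ∀ x n, a n ≤ x → n ≤ f x := fun x n h =>
    Finset.le_max' _ _ ((hmemS x n).2 h)
  refine ⟨f, fun x => ⟨hfa x, hfmax x⟩, ?_⟩
  intro x y
  apply le_antisymm
  · exact le_min (hfmax x _ ((hfa (x ⊓ y)).trans inf_le_left))
      (hfmax y _ ((hfa (x ⊓ y)).trans inf_le_right))
  · refine hfmax _ _ (le_inf ?_ ?_)
    · exact (ha.monotone (min_le_left _ _)).trans (hfa x)
    · exact (ha.monotone (min_le_right _ _)).trans (hfa y)
end

section
/- Let L be a join-semilattice, G a generating subset of L (meaning: for all a,b ∈ L with a ≰ b there exists g ∈ G with g ≤ a and g ≰ b), and n a positive integer. Then L has breadth at most n if and only if for every (n+1)-element subset U of G there exists u ∈ U such that u ≤ ⋁(U \ {u}). -/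
/-- Breadth can be verified on a generating subset: if G generates the join-semilattice L
(for all a ≰ b there is g ∈ G with g ≤ a, g ≰ b) and n ≥ 1, then L has breadth at most n
iff every (n+1)-element subset U of G has an element u with u ≤ ⋁(U \ {u}). -/
theorem stmt_6 (L : Type*) [SemilatticeSup L] [DecidableEq L] (n : ℕ) (hn : 0 < n)
    (G : Set L) (hG : ∀ a b : L, ¬ a ≤ b → ∃ g ∈ G, g ≤ a ∧ ¬ g ≤ b) :
    (∀ A : Finset L, A.card = n + 1 →
        ∃ a ∈ A, ∀ (h : (A.erase a).Nonempty), a ≤ (A.erase a).sup' h id) ↔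
    (∀ U : Finset L, ↑U ⊆ G → U.card = n + 1 →
        ∃ u ∈ U, ∀ (h : (U.erase u).Nonempty), u ≤ (U.erase u).sup' h id) := by
  constructor
  · intro h U _ hcard
    exact h U hcard
  · intro h A hcard
    by_contra hA
    push_neg at hA
    have hne : ∀ a ∈ A, (A.erase a).Nonempty := by
      intro a ha
      rw [← Finset.card_pos, Finset.card_erase_of_mem ha, hcard]
      omega
    have key : ∀ a ∈ A, ∃ g, g ∈ G ∧ g ≤ a ∧
        ∀ (h' : (A.erase a).Nonempty), ¬ g ≤ (A.erase a).sup' h' id := by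
      intro a ha
      obtain ⟨h', hns⟩ := hA a ha
      obtain ⟨g, hgG, hga, hgn⟩ := hG a _ hns
      exact ⟨g, hgG, hga, fun _ => hgn⟩
    choose! g hgG hga hgn using key
    have hinj : Set.InjOn g A := by
      intro a ha b hb hab
      by_contra hne'
      have hmem : a ∈ A.erase b := Finset.mem_erase.2 ⟨hne', ha⟩
      have : g a ≤ (A.erase b).sup' (hne b hb) id :=
        le_trans (hga a ha) (Finset.le_sup' id hmem)
      rw [hab] at this
      exact hgn b hb (hne b hb) this
    set U := A.image g with hU
    have hUcard : U.card = n + 1 := by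
      rw [hU, Finset.card_image_of_injOn hinj, hcard]
    have hUsub : ↑U ⊆ G := by
      intro x hx
      simp only [hU, Finset.coe_image, Set.mem_image, Finset.mem_coe] at hx
      obtain ⟨a, ha, rfl⟩ := hx
      exact hgG a ha
    obtain ⟨u, hu, hule⟩ := h U hUsub hUcard
    obtain ⟨a, ha, rfl⟩ := Finset.mem_image.1 hu
    have hUne : (U.erase (g a)).Nonempty := by
      rw [← Finset.card_pos, Finset.card_erase_of_mem hu, hUcard]
      omega
    have hsup : (U.erase (g a)).sup' hUne id ≤ (A.erase a).sup' (hne a ha) id := by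
      apply Finset.sup'_le
      intro x hx
      obtain ⟨hxne, hxU⟩ := Finset.mem_erase.1 hx
      obtain ⟨b, hb, rfl⟩ := Finset.mem_image.1 hxU
      have hba : b ≠ a := fun hba => hxne (by rw [hba])
      exact le_trans (hga b hb) (Finset.le_sup' id (Finset.mem_erase.2 ⟨hba, hb⟩))
    exact hgn a ha (hne a ha) (le_trans (hule hUne) hsup)
end

section
/- Let κ be a regular uncountable cardinal and n a positive integer. Suppose f₀ : [κ⁺ⁿ]^{n+1} → [κ⁺ⁿ]^{<κ} satisfies: for every (n+2)-element subset U of κ⁺ⁿ there exists ξ ∈ U with ξ ∈ f₀(U \ {ξ}). Then there exists an algebraic closure operator f on [κ⁺ⁿ]^{<κ} (ordered by inclusion) such that for every (n+2)-element subset U of κ⁺ⁿ there exists ξ ∈ U with ξ ∈ f(U \ {ξ}), and f(X) = X for every X with |X| ≤ n. -/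
/-!
Close a set under `Y ↦ f₀ Y` for its `(n + 1)`-element subsets `Y` by iterating the
one-step closure `X ↦ X ∪ ⋃ {f₀ Y | Y ⊆ X, |Y| = n + 1}` ω times. Since each `Y` is
finite, the step commutes with directed unions, hence so does its ω-iterate, which is
therefore an algebraic closure operator. Regularity of the uncountable cardinal `κ` keeps
each step, and the countable union of the steps, below `κ`; a set with at most `n`
elements has no `(n + 1)`-element subsets, so it is already closed.
-/

open Cardinal Set

section iSupIterate

variable {α : Type*} [CompleteLattice α] {g : α → α}

def iSupIterate (g : α → α) (a : α) : α := ⨆ k, g^[k] a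

lemma le_iSupIterate (g : α → α) (a : α) : a ≤ iSupIterate g a :=
  le_iSup (fun k => g^[k] a) 0

lemma apply_le_iSupIterate (g : α → α) (a : α) : g a ≤ iSupIterate g a :=
  le_iSup (fun k => g^[k] a) 1

lemma iSupIterate_eq_self {a : α} (ha : g a = a) : iSupIterate g a = a := by
  simp only [iSupIterate, Function.iterate_fixed ha, iSup_const]

lemma ScottContinuous.iterate (hg : ScottContinuous g) : ∀ k, ScottContinuous g^[k]
  | 0 => ScottContinuous.id
  | k + 1 => by rw [Function.iterate_succ]; exact hg.comp (hg.iterate k)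

lemma scottContinuous_iSupIterate (hg : ScottContinuous g) : ScottContinuous (iSupIterate g) :=
  .of_map_sSup fun d hne hdir => by
    simp only [iSupIterate, sSup_image,
      fun k : ℕ => ScottContinuous.map_sSup (hg.iterate k) hne hdir]
    exact iSup_comm.trans (iSup_congr fun _ => iSup_comm)

lemma ScottContinuous.map_iSupIterate (hg : ScottContinuous g) (hle : ∀ a, a ≤ g a) (a : α) :
    g (iSupIterate g a) = iSupIterate g a := by
  have hchain : Monotone fun k => g^[k] a :=
    monotone_nat_of_le_succ fun k => by rw [Function.iterate_succ_apply']; exact hle _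
  refine le_antisymm ?_ (hle _)
  calc g (sSup (range fun k => g^[k] a))
      = sSup (range fun k => g^[k + 1] a) := by
        rw [hg.map_sSup (range_nonempty _) hchain.directed_le.directedOn_range, ← range_comp]
        simp only [Function.comp_def, Function.iterate_succ_apply']
    _ ≤ iSupIterate g a :=
        sSup_le <| forall_mem_range.2 fun k => le_iSup (fun k => g^[k] a) (k + 1)

lemma ScottContinuous.iSupIterate_idem (hg : ScottContinuous g) (hle : ∀ a, a ≤ g a) (a : α) :
    iSupIterate g (iSupIterate g a) = iSupIterate g a :=
  iSupIterate_eq_self (hg.map_iSupIterate hle a)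

lemma ScottContinuous.subtype_map {p : α → Prop} (hp : ∀ a b, a ≤ b → p b → p a)
    (hg : ScottContinuous g) (hgp : ∀ a, p a → p (g a)) :
    ScottContinuous (Subtype.map g hgp) := by
  intro d hne hdir m hm
  -- `p` is down-closed, so the supremum of `d` in the subtype is its supremum in `α`
  have hsup : IsLUB (Subtype.val '' d) m.1 := by
    have hle : sSup (Subtype.val '' d) ≤ m.1 := sSup_le (forall_mem_image.2 fun x hx => hm.1 hx)
    have : m ≤ ⟨_, hp _ _ hle m.2⟩ := hm.2 fun x hx => le_sSup (mem_image_of_mem _ hx)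
    exact (le_antisymm hle this) ▸ isLUB_sSup _
  have himg := hg (hne.image _) (directedOn_image.2 hdir) hsup
  refine ⟨forall_mem_image.2 fun x hx => himg.1 (mem_image_of_mem _ (mem_image_of_mem _ hx)), ?_⟩
  intro u hu
  exact himg.2 (forall_mem_image.2 <| forall_mem_image.2 fun x hx => hu (mem_image_of_mem _ hx))

end iSupIterate

lemma mk_iSupIterate_lt {Ω : Type*} {κ : Cardinal} (hreg : κ.IsRegular) (hunc : ℵ₀ < κ)
    {g : Set Ω → Set Ω} (hg : ∀ X : Set Ω, #X < κ → #(g X) < κ) {X : Set Ω} (hX : #X < κ) :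
    #↥(iSupIterate g X) < κ := by
  have hiter : ∀ k, #↥(g^[k] X) < κ := by
    intro k
    induction k with
    | zero => exact hX
    | succ k ih => rw [Function.iterate_succ_apply']; exact hg _ ih
  rw [iSupIterate, iSup_eq_iUnion, ← lift_uzero #↥(⋃ k, g^[k] X)]
  refine mk_iUnion_le_sum_mk_lift.trans_lt (sum_lt_lift_of_isRegular hreg ?_ hiter)
  rwa [mk_nat, lift_aleph0]

section closureStep

variable {Ω : Type*} (n : ℕ) (f₀ : Set Ω → Set Ω)

def closureStep (X : Set Ω) : Set Ω :=
  X ∪ ⋃ Y ∈ {Y : Set Ω | Y ⊆ X ∧ Y.ncard = n + 1}, f₀ Y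

variable {n f₀}

lemma subset_closureStep (X : Set Ω) : X ⊆ closureStep n f₀ X := subset_union_left

lemma apply_subset_closureStep {X Y : Set Ω} (hYX : Y ⊆ X) (hY : Y.ncard = n + 1) :
    f₀ Y ⊆ closureStep n f₀ X :=
  fun _ hx => Or.inr (mem_iUnion₂.2 ⟨Y, ⟨hYX, hY⟩, hx⟩)

lemma closureStep_mono : Monotone (closureStep n f₀) := fun _ _ h =>
  union_subset_union h <| biUnion_subset_biUnion_left fun _ hY => ⟨hY.1.trans h, hY.2⟩

lemma scottContinuous_closureStep : ScottContinuous (closureStep n f₀) := by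
  refine .of_map_sSup fun d hne hdir =>
    le_antisymm ?_ (by rw [sSup_image]; exact closureStep_mono.le_map_sSup)
  rintro x (hx | hx)
  · obtain ⟨X, hXd, hxX⟩ := mem_sUnion.1 hx
    exact mem_sUnion.2 ⟨_, mem_image_of_mem _ hXd, subset_closureStep X hxX⟩
  · obtain ⟨Y, ⟨hYd, hY⟩, hxY⟩ := mem_iUnion₂.1 hx
    -- `Y` has `n + 1` elements, so it already lies in one member of the directed family
    obtain ⟨X, hXd, hYX⟩ := hdir.exists_mem_subset_of_finite_of_subset_sUnion hne
      (finite_of_ncard_ne_zero (by omega)) hYd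
    exact mem_sUnion.2 ⟨_, mem_image_of_mem _ hXd, apply_subset_closureStep hYX hY hxY⟩

lemma closureStep_eq_self {X : Set Ω} (hX : X.Finite) (hXn : X.ncard ≤ n) :
    closureStep n f₀ X = X :=
  union_eq_left.2 <| iUnion₂_subset fun Y ⟨hYX, hY⟩ => by
    have := ncard_le_ncard hYX hX
    omega

lemma mk_closureStep_lt {κ : Cardinal} (hreg : κ.IsRegular) (hunc : ℵ₀ < κ)
    (hf₀ : ∀ Y : Set Ω, Y.Finite → Y.ncard = n + 1 → #↥(f₀ Y) < κ)
    {X : Set Ω} (hX : #X < κ) : #↥(closureStep n f₀ X) < κ := by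
  have hindex : #↥{Y : Set Ω | Y ⊆ X ∧ Y.ncard = n + 1} < κ := by
    refine (mk_le_mk_of_subset ?_).trans_lt
      ((mk_bounded_subset_le X (n + 1 : ℕ)).trans_lt ?_)
    · rintro Y ⟨hYX, hY⟩
      refine ⟨hYX, ?_⟩
      have : Finite Y := finite_of_ncard_ne_zero (by omega)
      rw [← Nat.cast_card, Nat.card_coe_set_eq, hY]
    · rw [power_natCast, power_nat_eq (le_max_right _ _) (by omega)]
      exact max_lt hX hunc
  refine (mk_union_le _ _).trans_lt (add_lt_of_lt hreg.aleph0_le hX ?_)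
  refine (card_biUnion_lt_iff_forall_of_isRegular hreg hindex).2 ?_
  rintro Y ⟨-, hY⟩
  exact hf₀ Y (finite_of_ncard_ne_zero (by omega)) hY

end closureStep

theorem stmt_7_general (κ : Cardinal) (hreg : κ.IsRegular) (hunc : Cardinal.aleph0 < κ)
    (n : ℕ) (Ω : Type)
    (f₀ : Set Ω → Set Ω)
    (hf₀small : ∀ Y : Set Ω, Y.Finite → Y.ncard = n + 1 → Cardinal.mk ↥(f₀ Y) < κ)
    (hf₀ : ∀ U : Set Ω, U.Finite → U.ncard = n + 2 → ∃ ξ ∈ U, ξ ∈ f₀ (U \ {ξ})) :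
    ∃ f : {X : Set Ω // Cardinal.mk ↥X < κ} → {X : Set Ω // Cardinal.mk ↥X < κ},
      (∀ X, f (f X) = f X) ∧ (∀ X, X ≤ f X) ∧ Monotone f ∧
      (∀ (S : Set {X : Set Ω // Cardinal.mk ↥X < κ}) (m), S.Nonempty →
        DirectedOn (· ≤ ·) S → IsLUB S m → IsLUB (f '' S) (f m)) ∧
      (∀ U : Set Ω, U.Finite → U.ncard = n + 2 →
        ∃ ξ ∈ U, ∀ (h : Cardinal.mk ↥(U \ {ξ}) < κ), ξ ∈ (f ⟨U \ {ξ}, h⟩).1) ∧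
      (∀ (X : Set Ω), X.Finite → X.ncard ≤ n →
        ∀ (h : Cardinal.mk ↥X < κ), f ⟨X, h⟩ = ⟨X, h⟩) := by
  have hstep := scottContinuous_closureStep (n := n) (f₀ := f₀)
  have hcont : ScottContinuous (Subtype.map (iSupIterate (closureStep n f₀))
      fun _ => mk_iSupIterate_lt hreg hunc fun _ => mk_closureStep_lt hreg hunc hf₀small) :=
    (scottContinuous_iSupIterate hstep).subtype_map
      (fun _ _ h hb => (mk_le_mk_of_subset h).trans_lt hb) _
  refine ⟨_, fun X => Subtype.ext (hstep.iSupIterate_idem subset_closureStep X.1),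
    fun X => le_iSupIterate _ X.1, hcont.monotone, fun S m hne hdir => hcont hne hdir (a := m),
    ?_, ?_⟩
  · intro U hU hUn
    obtain ⟨ξ, hξU, hξ⟩ := hf₀ U hU hUn
    have hcard : (U \ {ξ}).ncard = n + 1 := by rw [ncard_sdiff_singleton_of_mem hξU, hUn]; rfl
    exact ⟨ξ, hξU, fun _ => apply_le_iSupIterate (closureStep n f₀) (U \ {ξ})
      (apply_subset_closureStep subset_rfl hcard hξ)⟩
  · intro X hX hXn _
    exact Subtype.ext (iSupIterate_eq_self (closureStep_eq_self hX hXn))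

/-- From a Kuratowski-type function f₀ on (n+1)-element subsets of a set Ω of cardinality κ⁺ⁿ
(κ regular uncountable), one obtains an algebraic closure operator f on [Ω]^{<κ} such that
every (n+2)-element subset U of Ω has an element ξ with ξ ∈ f(U \ {ξ}), and f(X) = X
whenever |X| ≤ n. -/
theorem stmt_7 (κ : Cardinal) (hreg : κ.IsRegular) (hunc : Cardinal.aleph0 < κ)
    (n : ℕ) (hn : 0 < n) (Ω : Type) (hΩ : Cardinal.mk Ω = (Order.succ)^[n] κ)
    (f₀ : Set Ω → Set Ω)
    (hf₀small : ∀ Y : Set Ω, Y.Finite → Y.ncard = n + 1 → Cardinal.mk ↥(f₀ Y) < κ)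
    (hf₀ : ∀ U : Set Ω, U.Finite → U.ncard = n + 2 → ∃ ξ ∈ U, ξ ∈ f₀ (U \ {ξ})) :
    ∃ f : {X : Set Ω // Cardinal.mk ↥X < κ} → {X : Set Ω // Cardinal.mk ↥X < κ},
      (∀ X, f (f X) = f X) ∧ (∀ X, X ≤ f X) ∧ Monotone f ∧
      (∀ (S : Set {X : Set Ω // Cardinal.mk ↥X < κ}) (m), S.Nonempty →
        DirectedOn (· ≤ ·) S → IsLUB S m → IsLUB (f '' S) (f m)) ∧
      (∀ U : Set Ω, U.Finite → U.ncard = n + 2 →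
        ∃ ξ ∈ U, ∀ (h : Cardinal.mk ↥(U \ {ξ}) < κ), ξ ∈ (f ⟨U \ {ξ}, h⟩).1) ∧
      (∀ (X : Set Ω), X.Finite → X.ncard ≤ n →
        ∀ (h : Cardinal.mk ↥X < κ), f ⟨X, h⟩ = ⟨X, h⟩) :=
  stmt_7_general κ hreg hunc n Ω f₀ hf₀small hf₀
end

section
/- Every preskeleton F of a lower finite normed lattice K is a meet-subsemilattice of K. -/
/-- Every preskeleton F of a lower finite normed lattice K (each level F ∩ K_ξ is a chain,
and F is closed under the projections x ↦ x_{(ξ)}) is a meet-subsemilattice of K. -/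
theorem stmt_11 (K : Type*) [Lattice K] [OrderBot K]
    (hLF : ∀ q : K, (Set.Iic q).Finite)
    (d : K → Ordinal) (hd : ∀ x y : K, d (x ⊔ y) = max (d x) (d y)) (hd0 : d ⊥ = 0)
    (p : K → Ordinal → K)
    (hp : ∀ (x : K) (ξ : Ordinal), IsGreatest {z : K | z ≤ x ∧ d z ≤ ξ} (p x ξ))
    (F : Set K)
    (hchain : ∀ ξ : Ordinal, IsChain (· ≤ ·) {x ∈ F | d x = ξ})
    (hproj : ∀ x ∈ F, ∀ ξ : Ordinal, p x ξ ∈ F) :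
    ∀ x ∈ F, ∀ y ∈ F, x ⊓ y ∈ F := by
  intro x hx y hy
  set z := x ⊓ y with hz
  set ξ := d z with hξ
  have hax := hp x ξ
  have hay := hp y ξ
  have hzx : z ≤ p x ξ := hax.2 ⟨inf_le_left, le_rfl⟩
  have hzy : z ≤ p y ξ := hay.2 ⟨inf_le_right, le_rfl⟩
  have mono : ∀ a b : K, a ≤ b → d a ≤ d b := by
    intro a b h
    have h2 := hd a b
    rw [sup_eq_right.mpr h] at h2
    rw [h2]; exact le_max_left _ _
  have hdx : d (p x ξ) = ξ := le_antisymm hax.1.2 (mono _ _ hzx)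
  have hdy : d (p y ξ) = ξ := le_antisymm hay.1.2 (mono _ _ hzy)
  have hxF : p x ξ ∈ F := hproj x hx ξ
  have hyF : p y ξ ∈ F := hproj y hy ξ
  rcases eq_or_ne (p x ξ) (p y ξ) with he | hne
  · have hle : p x ξ ≤ z := le_inf hax.1.1 (he ▸ hay.1.1)
    have hzeq : z = p x ξ := le_antisymm hzx hle
    rw [hzeq]; exact hxF
  · rcases hchain ξ ⟨hxF, hdx⟩ ⟨hyF, hdy⟩ hne with h | h
    · have hle : p x ξ ≤ z := le_inf hax.1.1 (le_trans h hay.1.1)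
      have hzeq : z = p x ξ := le_antisymm hzx hle
      rw [hzeq]; exact hxF
    · have hle : p y ξ ≤ z := le_inf (le_trans h hax.1.1) hay.1.1
      have hzeq : z = p y ξ := le_antisymm hzy hle
      rw [hzeq]; exact hyF
end

section
/- In any preskeleton F of a lower finite normed lattice K, every element has at most two lower covers within F. Consequently, if F is upward directed then F is a 2-ladder. -/
/-!
Two lower covers `y` of `x` in `F` with `∂y < ∂x` are both projections `x_(∂y)` of `x`, hence
comparable, hence equal; two with `∂y = ∂x` lie in the chain `F ∩ K_{∂x}`, hence are equal too.
For the lattice part, the key fact is that any two elements `a, b` of `F` have, above any common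
lower bound `w`, a common lower bound in `F`: by well-founded induction on `max ∂a ∂b`, replace
the element of larger norm by its projection to the smaller norm until both norms agree, and then
use that `F ∩ K_ξ` is a chain. So common lower and upper bounds in `F` form directed sets, and
lower finiteness yields extremal elements.
-/

structure IsPreskeleton {K ι : Type*} [Preorder K] (d : K → ι) (p : K → ι → K) (F : Set K) :
    Prop where
  isChain_level : ∀ ξ, IsChain (· ≤ ·) {x ∈ F | d x = ξ}
  proj_mem : ∀ x ∈ F, ∀ ξ, p x ξ ∈ F

theorem IsChain.subsingleton_of_covBy {α : Type*} [PartialOrder α] {s : Set α} {x : α}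
    (hs : IsChain (· ≤ ·) s) (hcov : ∀ y ∈ s, y ⋖ x) : s.Subsingleton := by
  intro a ha b hb
  rcases hs.total ha hb with hab | hba
  · exact (((hcov a ha).eq_or_eq hab (hcov b hb).le).resolve_right (hcov b hb).ne).symm
  · exact ((hcov b hb).eq_or_eq hba (hcov a ha).le).resolve_right (hcov a ha).ne

theorem proj_mono {K ι : Type*} [Preorder K] [Preorder ι] {d : K → ι} {p : K → ι → K}
    (hp : ∀ x ξ, IsGreatest {z | z ≤ x ∧ d z ≤ ξ} (p x ξ)) (x : K) :
    Monotone (p x) :=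
  fun _ _ hξη ↦ (hp x _).2 ⟨(hp x _).1.1, (hp x _).1.2.trans hξη⟩

namespace IsPreskeleton

section PartialOrder

variable {K ι : Type*} [PartialOrder K] [LinearOrder ι] {d : K → ι} {p : K → ι → K} {F : Set K}

theorem coe_eq_proj_of_covBy (hF : IsPreskeleton d p F)
    (hp : ∀ x ξ, IsGreatest {z | z ≤ x ∧ d z ≤ ξ} (p x ξ)) {x y : F} (hyx : y ⋖ x)
    (hlt : d y < d x) : (y : K) = p x (d y) := by
  let q : F := ⟨p x (d y), hF.proj_mem x x.2 _⟩
  have hyq : y ≤ q := (hp x (d y)).2 ⟨hyx.le, le_rfl⟩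
  rcases hyx.eq_or_eq hyq (hp x (d y)).1.1 with hqy | hqx
  · exact congrArg Subtype.val hqy.symm
  · exact absurd (hqx ▸ (hp x (d y)).1.2 : d x ≤ d y) hlt.not_ge

theorem ncard_covBy_le_two (hF : IsPreskeleton d p F) (hd : Monotone d)
    (hp : ∀ x ξ, IsGreatest {z | z ≤ x ∧ d z ≤ ξ} (p x ξ)) (x : F) :
    {y : F | y ⋖ x}.ncard ≤ 2 := by
  set A := {y : F | y ⋖ x ∧ d y < d x}
  set B := {y : F | y ⋖ x ∧ d y = d x}
  have hAB : {y : F | y ⋖ x} = A ∪ B := by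
    ext y
    simp only [Set.mem_ofPred_eq, Set.mem_union, A, B, ← and_or_left]
    exact ⟨fun h ↦ ⟨h, (hd (Subtype.coe_le_coe.2 h.le)).lt_or_eq⟩, And.left⟩
  have hA : IsChain (· ≤ ·) A := by
    intro y₁ hy₁ y₂ hy₂ _
    change (y₁ : K) ≤ y₂ ∨ (y₂ : K) ≤ y₁
    rw [hF.coe_eq_proj_of_covBy hp hy₁.1 hy₁.2, hF.coe_eq_proj_of_covBy hp hy₂.1 hy₂.2]
    exact (le_total (d y₁) (d y₂)).imp (fun h ↦ proj_mono hp x h) (fun h ↦ proj_mono hp x h)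
  have hB : IsChain (· ≤ ·) B := by
    intro y₁ hy₁ y₂ hy₂ hne
    exact hF.isChain_level (d x) ⟨y₁.2, hy₁.2⟩ ⟨y₂.2, hy₂.2⟩ (Subtype.coe_injective.ne hne)
  have hA1 := hA.subsingleton_of_covBy fun y hy ↦ hy.1
  have hB1 := hB.subsingleton_of_covBy fun y hy ↦ hy.1
  calc {y : F | y ⋖ x}.ncard ≤ A.ncard + B.ncard := hAB ▸ Set.ncard_union_le A B
    _ ≤ 1 + 1 := add_le_add ((Set.ncard_le_one hA1.finite).2 hA1)
        ((Set.ncard_le_one hB1.finite).2 hB1)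

theorem exists_mem_between [WellFoundedLT ι] (hF : IsPreskeleton d p F) (hd : Monotone d)
    (hp : ∀ x ξ, IsGreatest {z | z ≤ x ∧ d z ≤ ξ} (p x ξ)) {a b w : K} (ha : a ∈ F)
    (hb : b ∈ F) (hwa : w ≤ a) (hwb : w ≤ b) : ∃ c ∈ F, w ≤ c ∧ c ≤ a ∧ c ≤ b := by
  induction hm : max (d a) (d b) using WellFoundedLT.induction generalizing a b with
  | ind m ih =>
  wlog hab : d a ≤ d b generalizing a b
  · obtain ⟨c, hcF, hwc, hcb, hca⟩ := this hb ha hwb hwa (max_comm (d a) (d b) ▸ hm)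
      (le_of_not_ge hab)
    exact ⟨c, hcF, hwc, hca, hcb⟩
  rcases hab.lt_or_eq with hlt | heq
  · have hb' := hp b (d a)
    obtain ⟨c, hcF, hwc, hca, hcb'⟩ := ih (d a) (by rwa [← hm, max_eq_right hab])
      ha (hF.proj_mem b hb (d a)) hwa (hb'.2 ⟨hwb, hd hwa⟩) (max_eq_left hb'.1.2)
    exact ⟨c, hcF, hwc, hca, hcb'.trans hb'.1.1⟩
  · rcases (hF.isChain_level (d a)).total ⟨ha, rfl⟩ ⟨hb, heq.symm⟩ with hle | hle
    · exact ⟨a, ha, hwa, le_rfl, hle⟩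
    · exact ⟨b, hb, hwb, hle, le_rfl⟩

end PartialOrder

section SemilatticeSup

variable {K ι : Type*} [SemilatticeSup K] [LinearOrder ι] [WellFoundedLT ι] {d : K → ι}
  {p : K → ι → K} {F : Set K}

theorem exists_isGreatest_common_lower_bound [OrderBot K] (hF : IsPreskeleton d p F)
    (hd : Monotone d) (hp : ∀ x ξ, IsGreatest {z | z ≤ x ∧ d z ≤ ξ} (p x ξ)) {x y : K}
    (hfin : (Set.Iic x).Finite) (hx : x ∈ F) (hy : y ∈ F) :
    ∃ z, IsGreatest {w ∈ F | w ≤ x ∧ w ≤ y} z := by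
  set S := {w ∈ F | w ≤ x ∧ w ≤ y}
  have hdir : DirectedOn (· ≤ ·) S := fun a ha b hb ↦
    let ⟨c, hcF, hc, hcx, hcy⟩ :=
      hF.exists_mem_between hd hp hx hy (sup_le ha.2.1 hb.2.1) (sup_le ha.2.2 hb.2.2)
    ⟨c, ⟨hcF, hcx, hcy⟩, le_sup_left.trans hc, le_sup_right.trans hc⟩
  obtain ⟨c, hcF, -, hcx, hcy⟩ := hF.exists_mem_between hd hp hx hy bot_le bot_le
  obtain ⟨m, hm⟩ := (hfin.subset fun _ hw ↦ hw.2.1 : S.Finite).exists_maximal ⟨c, hcF, hcx, hcy⟩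
  exact ⟨m, hdir.maximal_iff_isGreatest.1 hm⟩

theorem exists_isLeast_common_upper_bound (hF : IsPreskeleton d p F) (hd : Monotone d)
    (hp : ∀ x ξ, IsGreatest {z | z ≤ x ∧ d z ≤ ξ} (p x ξ)) (hfin : ∀ z : K, (Set.Iic z).Finite)
    (hdir : DirectedOn (· ≤ ·) F) {x y : K} (hx : x ∈ F) (hy : y ∈ F) :
    ∃ z, IsLeast {w ∈ F | x ≤ w ∧ y ≤ w} z := by
  set U := {w ∈ F | x ≤ w ∧ y ≤ w}
  have hcodir : DirectedOn (· ≥ ·) U := fun a ha b hb ↦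
    let ⟨c, hcF, hc, hca, hcb⟩ :=
      hF.exists_mem_between hd hp ha.1 hb.1 (sup_le ha.2.1 ha.2.2) (sup_le hb.2.1 hb.2.2)
    ⟨c, ⟨hcF, le_sup_left.trans hc, le_sup_right.trans hc⟩, hca, hcb⟩
  obtain ⟨z, hzF, hxz, hyz⟩ := hdir x hx y hy
  -- a minimal element of the finite set `U ∩ Iic z` is minimal in all of `U`
  have hfinU : (U ∩ Set.Iic z).Finite := (hfin z).subset Set.inter_subset_right
  obtain ⟨m, hm⟩ := hfinU.exists_minimal ⟨z, ⟨hzF, hxz, hyz⟩, le_rfl⟩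
  exact ⟨m, hcodir.minimal_iff_isLeast.1 ⟨hm.1.1, fun c hc hcm ↦ hm.2 ⟨hc, hcm.trans hm.1.2⟩ hcm⟩⟩

end SemilatticeSup

end IsPreskeleton

theorem stmt_12_general (K : Type*) [Lattice K] [OrderBot K]
    (hLF : ∀ q : K, (Set.Iic q).Finite)
    (d : K → Ordinal) (hd : ∀ x y : K, d (x ⊔ y) = max (d x) (d y))
    (p : K → Ordinal → K)
    (hp : ∀ (x : K) (ξ : Ordinal), IsGreatest {z : K | z ≤ x ∧ d z ≤ ξ} (p x ξ))
    (F : Set K)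
    (hchain : ∀ ξ : Ordinal, IsChain (· ≤ ·) {x ∈ F | d x = ξ})
    (hproj : ∀ x ∈ F, ∀ ξ : Ordinal, p x ξ ∈ F) :
    (∀ x : ↥F, Set.ncard {y : ↥F | y ⋖ x} ≤ 2) ∧
    (DirectedOn (· ≤ ·) F →
      (∀ x : ↥F, (Set.Iic x).Finite) ∧
      (∀ x ∈ F, ∀ y ∈ F, ∃ z : K, IsGreatest {w ∈ F | w ≤ x ∧ w ≤ y} z) ∧
      (∀ x ∈ F, ∀ y ∈ F, ∃ z : K, IsLeast {w ∈ F | x ≤ w ∧ y ≤ w} z)) := by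
  have hmono : Monotone d := Monotone.of_map_sup hd
  have hF : IsPreskeleton d p F := ⟨hchain, hproj⟩
  refine ⟨hF.ncard_covBy_le_two hmono hp, fun hdir ↦ ⟨?_, ?_, ?_⟩⟩
  · exact fun x ↦ (hLF x).preimage Subtype.val_injective.injOn
  · exact fun x hx y hy ↦ hF.exists_isGreatest_common_lower_bound hmono hp (hLF x) hx hy
  · exact fun x hx y hy ↦ hF.exists_isLeast_common_upper_bound hmono hp hLF hdir hx hy

/-- In a preskeleton F of a lower finite normed lattice K, every element has at most two
lower covers within F; consequently, if F is upward directed then F is a 2-ladder (a lower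
finite lattice, i.e. every pair in F has a meet and a join within F, in which every element
has at most two lower covers). -/
theorem stmt_12 (K : Type*) [Lattice K] [OrderBot K]
    (hLF : ∀ q : K, (Set.Iic q).Finite)
    (d : K → Ordinal) (hd : ∀ x y : K, d (x ⊔ y) = max (d x) (d y)) (hd0 : d ⊥ = 0)
    (p : K → Ordinal → K)
    (hp : ∀ (x : K) (ξ : Ordinal), IsGreatest {z : K | z ≤ x ∧ d z ≤ ξ} (p x ξ))
    (F : Set K)
    (hchain : ∀ ξ : Ordinal, IsChain (· ≤ ·) {x ∈ F | d x = ξ})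
    (hproj : ∀ x ∈ F, ∀ ξ : Ordinal, p x ξ ∈ F) :
    (∀ x : ↥F, Set.ncard {y : ↥F | y ⋖ x} ≤ 2) ∧
    (DirectedOn (· ≤ ·) F →
      (∀ x : ↥F, (Set.Iic x).Finite) ∧
      (∀ x ∈ F, ∀ y ∈ F, ∃ z : K, IsGreatest {w ∈ F | w ≤ x ∧ w ≤ y} z) ∧
      (∀ x ∈ F, ∀ y ∈ F, ∃ z : K, IsLeast {w ∈ F | x ≤ w ∧ y ≤ w} z)) :=
  stmt_12_general K hLF d hd p hp F hchain hproj
end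

section
/- Every locally countable lower finite normed lattice has cardinality at most ℵ₁ and the order type of the range of its norm is at most ω₁. -/
/-!
For `a ∈ K`, the map `x ↦ x ⊔ a` sends every `x` with `∂x ≤ ∂a` to the level of `∂a`, and
`x ≤ x ⊔ a`; so `{x | ∂x ≤ ∂a}` is covered by the countably many finite ideals below the level of
`∂a`, hence is countable. Thus every proper initial segment of the range of `∂` is countable, which
bounds its order type by `ω₁`, and `K` is a union of at most `ℵ₁` countable levels.
-/

open Cardinal Ordinal Set

universe u v

theorem countable_setOf_map_le {K ι : Type*} [Lattice K] [LinearOrder ι]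
    {d : K → ι} (hLF : ∀ q : K, (Iic q).Finite) (hd : ∀ x y, d (x ⊔ y) = max (d x) (d y))
    (hloc : ∀ ξ, {x | d x = ξ}.Countable) (a : K) : {x | d x ≤ d a}.Countable := by
  have hcover : {x | d x ≤ d a} ⊆ ⋃ y ∈ {y | d y = d a}, Iic y := fun x hx =>
    mem_biUnion (x := x ⊔ a) (by simp [hd, max_eq_right hx.out]) le_sup_left
  exact ((hloc (d a)).biUnion fun y _ => (hLF y).countable).mono hcover

theorem Ordinal.type_lt_le_ord_aleph_one {α : Type*} [LinearOrder α] [WellFoundedLT α]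
    (h : ∀ b : α, (Iio b).Countable) :
    type ((· < ·) : α → α → Prop) ≤ (aleph 1).ord := by
  refine le_of_forall_lt fun o ho => ?_
  obtain ⟨b, rfl⟩ := typein_surj _ ho
  rw [lt_ord, card_typein, lt_aleph_one_iff]
  exact le_aleph0_iff_set_countable.mpr (h b)

theorem Cardinal.mk_le_aleph_one_of_countable_fibers {α : Type u} {β : Type v} (f : α → β)
    (hβ : #β ≤ aleph 1) (hf : ∀ b, (f ⁻¹' {b}).Countable) : #α ≤ aleph 1 := by
  rw [← lift_le_aleph_one.{u, v}]
  calc lift.{v} #α ≤ lift.{u} #β * ℵ₀ :=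
        lift_mk_le_lift_mk_mul_of_lift_mk_preimage_le f fun b => by
          simpa using le_aleph0_iff_set_countable.mpr (hf b)
    _ ≤ aleph 1 * ℵ₀ := by gcongr; exact lift_le_aleph_one.mpr hβ
    _ = aleph 1 := mul_aleph0_eq (aleph0_le_aleph 1)

theorem stmt_14_general (K : Type*) [Lattice K]
    (hLF : ∀ q : K, (Set.Iic q).Finite)
    (d : K → Ordinal) (hd : ∀ x y : K, d (x ⊔ y) = max (d x) (d y))
    (hloc : ∀ ξ : Ordinal, {x : K | d x = ξ}.Countable) :
    Cardinal.mk K ≤ Cardinal.aleph 1 ∧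
    Ordinal.type ((· < ·) : ↥(Set.range d) → ↥(Set.range d) → Prop) ≤ (Cardinal.aleph 1).ord := by
  have hsegment : ∀ b : range d, (Iio b).Countable := by
    rintro ⟨_, a, rfl⟩
    refine (((countable_setOf_map_le hLF hd hloc a).image d).preimage
      Subtype.val_injective).mono ?_
    rintro ⟨_, x, rfl⟩ hx
    exact ⟨x, (show d x < d a from hx).le, rfl⟩
  have htype := type_lt_le_ord_aleph_one hsegment
  refine ⟨mk_le_aleph_one_of_countable_fibers (rangeFactorization d) ?_ fun ξ => ?_, htype⟩
  · simpa using card_le_card htype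
  · simpa [preimage, rangeFactorization, Subtype.ext_iff] using hloc ξ

/-- Every locally countable lower finite normed lattice has cardinality at most ℵ₁ and the
order type of the range of its norm is at most ω₁. -/
theorem stmt_14 (K : Type*) [Lattice K] [OrderBot K]
    (hLF : ∀ q : K, (Set.Iic q).Finite)
    (d : K → Ordinal) (hd : ∀ x y : K, d (x ⊔ y) = max (d x) (d y)) (hd0 : d ⊥ = 0)
    (hloc : ∀ ξ : Ordinal, {x : K | d x = ξ}.Countable) :
    Cardinal.mk K ≤ Cardinal.aleph 1 ∧
    Ordinal.type ((· < ·) : ↥(Set.range d) → ↥(Set.range d) → Prop) ≤ (Cardinal.aleph 1).ord :=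
  stmt_14_general K hLF d hd hloc
end

section
/- Let K be a lower finite normed lattice with a cofinal chain C. Then F := ⋃_{c ∈ C} Proj(c) is a skeleton of K, i.e., a preskeleton such that F ∩ K_ξ is cofinal in K_ξ for each ordinal ξ. In particular, every countable lower finite normed lattice has a skeleton. -/
/-- If C is a cofinal chain in a lower finite normed lattice K, then
F := ⋃_{c ∈ C} Proj(c) is a skeleton of K (a preskeleton cofinal in each level).
In particular, every countable lower finite normed lattice has a skeleton. -/
theorem stmt_15 (K : Type*) [Lattice K] [OrderBot K]
    (hLF : ∀ q : K, (Set.Iic q).Finite)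
    (d : K → Ordinal) (hd : ∀ x y : K, d (x ⊔ y) = max (d x) (d y)) (hd0 : d ⊥ = 0)
    (p : K → Ordinal → K)
    (hp : ∀ (x : K) (ξ : Ordinal), IsGreatest {z : K | z ≤ x ∧ d z ≤ ξ} (p x ξ)) :
    (∀ C : Set K, IsChain (· ≤ ·) C → (∀ x : K, ∃ c ∈ C, x ≤ c) →
      ∀ F : Set K, F = {y : K | ∃ c ∈ C, ∃ ξ ∈ Set.range d, y = p c ξ} →
        (∀ ξ : Ordinal, IsChain (· ≤ ·) {x ∈ F | d x = ξ}) ∧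
        (∀ x ∈ F, ∀ ξ : Ordinal, p x ξ ∈ F) ∧
        (∀ x : K, ∃ y ∈ F, d y = d x ∧ x ≤ y)) ∧
    (Countable K →
      ∃ G : Set K,
        (∀ ξ : Ordinal, IsChain (· ≤ ·) {x ∈ G | d x = ξ}) ∧
        (∀ x ∈ G, ∀ ξ : Ordinal, p x ξ ∈ G) ∧
        (∀ x : K, ∃ y ∈ G, d y = d x ∧ x ≤ y)) := by
  have hple : ∀ x ξ, p x ξ ≤ x := fun x ξ => (hp x ξ).1.1
  have hpd : ∀ x ξ, d (p x ξ) ≤ ξ := fun x ξ => (hp x ξ).1.2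
  have hpg : ∀ x ξ z, z ≤ x → d z ≤ ξ → z ≤ p x ξ := fun x ξ z h1 h2 => (hp x ξ).2 ⟨h1, h2⟩
  have hdm : ∀ x y : K, x ≤ y → d x ≤ d y := by
    intro x y h
    have h2 := hd x y
    rw [sup_eq_right.mpr h] at h2
    rw [h2]; exact le_max_left _ _
  have hpm : ∀ x y ξ, x ≤ y → p x ξ ≤ p y ξ := fun x y ξ h =>
    hpg y ξ _ ((hple x ξ).trans h) (hpd x ξ)
  have hpo : ∀ x ξ η, ξ ≤ η → p x ξ ≤ p x η := fun x ξ η h =>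
    hpg x η _ (hple x ξ) ((hpd x ξ).trans h)
  have hnorm : ∀ c ξ, p c ξ = p c (d (p c ξ)) := fun c ξ =>
    le_antisymm (hpg c _ _ (hple c ξ) le_rfl) (hpo c _ ξ (hpd c ξ))
  have main : ∀ C : Set K, IsChain (· ≤ ·) C → (∀ x : K, ∃ c ∈ C, x ≤ c) →
      ∀ F : Set K, F = {y : K | ∃ c ∈ C, ∃ ξ ∈ Set.range d, y = p c ξ} →
        (∀ ξ : Ordinal, IsChain (· ≤ ·) {x ∈ F | d x = ξ}) ∧
        (∀ x ∈ F, ∀ ξ : Ordinal, p x ξ ∈ F) ∧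
        (∀ x : K, ∃ y ∈ F, d y = d x ∧ x ≤ y) := by
    intro C hC hcof F hF
    subst hF
    refine ⟨?_, ?_, ?_⟩
    · intro ξ a ha b hb _hne
      obtain ⟨⟨c1, hc1, η1, _, rfl⟩, hda⟩ := ha
      obtain ⟨⟨c2, hc2, η2, _, rfl⟩, hdb⟩ := hb
      have e1 : p c1 η1 = p c1 ξ := by rw [hnorm c1 η1, hda]
      have e2 : p c2 η2 = p c2 ξ := by rw [hnorm c2 η2, hdb]
      rcases hC.total hc1 hc2 with h | h
      · exact Or.inl (by rw [e1, e2]; exact hpm _ _ _ h)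
      · exact Or.inr (by rw [e1, e2]; exact hpm _ _ _ h)
    · rintro x ⟨c, hc, η, _, rfl⟩ ξ
      set x := p c η with hx
      refine ⟨c, hc, d (p x ξ), ⟨_, rfl⟩, ?_⟩
      refine le_antisymm (hpg c _ _ ((hple x ξ).trans (hple c η)) le_rfl) ?_
      have h1 : p c (d (p x ξ)) ≤ x := by
        rw [hx]
        exact hpo c _ η ((hdm _ _ (hple x ξ)).trans (hpd c η))
      exact hpg x ξ _ h1 ((hpd c _).trans (hpd x ξ))
    · intro x
      obtain ⟨c, hc, hxc⟩ := hcof x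
      refine ⟨p c (d x), ⟨c, hc, d x, ⟨x, rfl⟩, rfl⟩, ?_, hpg c (d x) x hxc le_rfl⟩
      exact le_antisymm (hpd c (d x)) (hdm _ _ (hpg c (d x) x hxc le_rfl))
  refine ⟨main, ?_⟩
  intro hcnt
  have : Nonempty K := ⟨⊥⟩
  obtain ⟨e, he⟩ := exists_surjective_nat K
  set c : ℕ → K := fun n => (Finset.range (n + 1)).sup e with hcdef
  have hcm : Monotone c := fun m n hmn =>
    Finset.sup_mono (Finset.range_subset_range.mpr (by omega))
  have hec : ∀ n, e n ≤ c n := fun n =>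
    Finset.le_sup (Finset.mem_range.mpr (by omega))
  have hchain : IsChain (· ≤ ·) (Set.range c) := by
    rintro _ ⟨m, rfl⟩ _ ⟨n, rfl⟩ _
    rcases le_total m n with h | h
    · exact Or.inl (hcm h)
    · exact Or.inr (hcm h)
  have hcof : ∀ x : K, ∃ y ∈ Set.range c, x ≤ y := by
    intro x
    obtain ⟨n, rfl⟩ := he x
    exact ⟨c n, ⟨n, rfl⟩, hec n⟩
  exact ⟨_, main (Set.range c) hchain hcof _ rfl⟩
end

section
/- Let K be a lower finite normed lattice whose poset Sk(K) of finite preskeletons (ordered by reverse containment) admits a filter G meeting Sk_a(K) for every a ∈ K. Then ⋃G is a skeleton of K; in particular, ⋃G is a cofinal meet-subsemilattice of K and a 2-ladder. -/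
/-- If 𝔾 is a filter of the poset of finite preskeletons of a lower finite normed lattice K
(ordered by reverse containment) meeting Sk_a(K) for every a ∈ K, then G := ⋃𝔾 is a
skeleton of K; in particular G is a cofinal meet-subsemilattice of K in which every element
has at most two lower covers (a 2-ladder). -/
theorem stmt_16 (K : Type*) [Lattice K] [OrderBot K]
    (hLF : ∀ q : K, (Set.Iic q).Finite)
    (d : K → Ordinal) (hd : ∀ x y : K, d (x ⊔ y) = max (d x) (d y)) (hd0 : d ⊥ = 0)
    (p : K → Ordinal → K)
    (hp : ∀ (x : K) (ξ : Ordinal), IsGreatest {z : K | z ≤ x ∧ d z ≤ ξ} (p x ξ))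
    (𝔾 : Set (Finset K))
    (hmem : ∀ F ∈ 𝔾, (∀ ξ : Ordinal, IsChain (· ≤ ·) {x ∈ (F : Set K) | d x = ξ}) ∧
        (∀ x ∈ F, ∀ ξ : Ordinal, p x ξ ∈ F))
    (hdir : ∀ F₁ ∈ 𝔾, ∀ F₂ ∈ 𝔾, ∃ F ∈ 𝔾, F₁ ⊆ F ∧ F₂ ⊆ F)
    (hdown : ∀ F ∈ 𝔾, ∀ F' : Finset K, F' ⊆ F →
        (∀ ξ : Ordinal, IsChain (· ≤ ·) {x ∈ (F' : Set K) | d x = ξ}) →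
        (∀ x ∈ F', ∀ ξ : Ordinal, p x ξ ∈ F') → F' ∈ 𝔾)
    (hgen : ∀ a : K, ∃ F ∈ 𝔾, ∃ x ∈ F, a ≤ x ∧ d a = d x) :
    ∀ G : Set K, G = {x : K | ∃ F ∈ 𝔾, x ∈ F} →
      (∀ ξ : Ordinal, IsChain (· ≤ ·) {x ∈ G | d x = ξ}) ∧
      (∀ x ∈ G, ∀ ξ : Ordinal, p x ξ ∈ G) ∧
      (∀ x : K, ∃ y ∈ G, d y = d x ∧ x ≤ y) ∧
      (∀ x ∈ G, ∀ y ∈ G, x ⊓ y ∈ G) ∧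
      (∀ x : K, ∃ y ∈ G, x ≤ y) ∧
      (∀ x : ↥G, Set.ncard {y : ↥G | y ⋖ x} ≤ 2) := by
  intro G hG
  have hGm : ∀ z : K, z ∈ G ↔ ∃ F ∈ 𝔾, z ∈ F := by
    intro z; rw [hG]; exact Iff.rfl
  -- monotonicity of the norm
  have dmono : ∀ a b : K, a ≤ b → d a ≤ d b := by
    intro a b h
    have h2 := hd a b
    rw [sup_eq_right.mpr h] at h2
    rw [h2]; exact le_max_left _ _
  -- monotonicity of projections in the ordinal argument
  have pmono : ∀ (x : K) (ξ₁ ξ₂ : Ordinal), ξ₁ ≤ ξ₂ → p x ξ₁ ≤ p x ξ₂ := by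
    intro x ξ₁ ξ₂ h
    exact (hp x ξ₂).2 ⟨(hp x ξ₁).1.1, le_trans (hp x ξ₁).1.2 h⟩
  -- levels of G are chains
  have hchain : ∀ ξ : Ordinal, IsChain (· ≤ ·) {x ∈ G | d x = ξ} := by
    intro ξ a ha b hb hne
    obtain ⟨F₁, hF₁, haF⟩ := (hGm a).1 ha.1
    obtain ⟨F₂, hF₂, hbF⟩ := (hGm b).1 hb.1
    obtain ⟨F, hF, h1, h2⟩ := hdir F₁ hF₁ F₂ hF₂
    exact (hmem F hF).1 ξ ⟨h1 haF, ha.2⟩ ⟨h2 hbF, hb.2⟩ hne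
  -- G is closed under projections
  have hpG : ∀ x ∈ G, ∀ ξ : Ordinal, p x ξ ∈ G := by
    intro x hx ξ
    obtain ⟨F, hF, hxF⟩ := (hGm x).1 hx
    exact (hGm _).2 ⟨F, hF, (hmem F hF).2 x hxF ξ⟩
  -- G is cofinal in each level
  have hcof : ∀ x : K, ∃ y ∈ G, d y = d x ∧ x ≤ y := by
    intro x
    obtain ⟨F, hF, y, hyF, hxy, hdx⟩ := hgen x
    exact ⟨y, (hGm y).2 ⟨F, hF, hyF⟩, hdx.symm, hxy⟩
  -- G is closed under meets
  have hmeet : ∀ x ∈ G, ∀ y ∈ G, x ⊓ y ∈ G := by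
    intro x hx y hy
    set ξ := d (x ⊓ y) with hξ
    have hpx := hp x ξ
    have hpy := hp y ξ
    have hxm : x ⊓ y ≤ p x ξ := hpx.2 ⟨inf_le_left, le_refl _⟩
    have hym : x ⊓ y ≤ p y ξ := hpy.2 ⟨inf_le_right, le_refl _⟩
    have hdx : d (p x ξ) = ξ := le_antisymm hpx.1.2 (dmono _ _ hxm)
    have hdy : d (p y ξ) = ξ := le_antisymm hpy.1.2 (dmono _ _ hym)
    have hpxG : p x ξ ∈ G := hpG x hx ξ
    have hpyG : p y ξ ∈ G := hpG y hy ξ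
    by_cases heq : p x ξ = p y ξ
    · have hle : p x ξ ≤ x ⊓ y := le_inf hpx.1.1 (heq ▸ hpy.1.1)
      have h2 : x ⊓ y = p x ξ := le_antisymm hxm hle
      rw [h2]; exact hpxG
    · rcases hchain ξ ⟨hpxG, hdx⟩ ⟨hpyG, hdy⟩ heq with h | h
      · have hle : p x ξ ≤ x ⊓ y := le_inf hpx.1.1 (le_trans h hpy.1.1)
        have h2 : x ⊓ y = p x ξ := le_antisymm hxm hle
        rw [h2]; exact hpxG
      · have hle : p y ξ ≤ x ⊓ y := le_inf (le_trans h hpx.1.1) hpy.1.1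
        have h2 : x ⊓ y = p y ξ := le_antisymm hym hle
        rw [h2]; exact hpyG
  refine ⟨hchain, hpG, hcof, hmeet,
    fun x => (hcof x).imp (fun y hy => ⟨hy.1, hy.2.2⟩), ?_⟩
  -- the 2-ladder property
  intro x
  -- two comparable covers of x are equal
  have eqcov : ∀ y₁ y₂ : ↥G, y₁ ⋖ x → y₂ ⋖ x → y₁ ≤ y₂ → y₁ = y₂ := by
    intro y₁ y₂ h1 h2 hle
    rcases lt_or_eq_of_le hle with h | h
    · exact absurd h2.1 (h1.2 h)
    · exact h
  -- at most one cover has full level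
  have samelevel : ∀ y₁ y₂ : ↥G, y₁ ⋖ x → y₂ ⋖ x →
      d (y₁ : K) = d (x : K) → d (y₂ : K) = d (x : K) → y₁ = y₂ := by
    intro y₁ y₂ h1 h2 hd1 hd2
    by_cases hne : y₁ = y₂
    · exact hne
    · have hne' : (y₁ : K) ≠ (y₂ : K) := fun h => hne (Subtype.ext h)
      rcases hchain (d (x : K)) ⟨y₁.2, hd1⟩ ⟨y₂.2, hd2⟩ hne' with h | h
      · exact eqcov y₁ y₂ h1 h2 (Subtype.coe_le_coe.mp h)
      · exact (eqcov y₂ y₁ h2 h1 (Subtype.coe_le_coe.mp h)).symm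
  -- a cover with strictly smaller level is the projection of x to its level
  have lowcov : ∀ y : ↥G, y ⋖ x → d (y : K) < d (x : K) → (y : K) = p (x : K) (d (y : K)) := by
    intro y hy hlt
    have hylt : (y : K) < (x : K) := Subtype.coe_lt_coe.mpr hy.1
    have hle : (y : K) ≤ p (x : K) (d (y : K)) :=
      (hp (x : K) (d (y : K))).2 ⟨le_of_lt hylt, le_refl _⟩
    have hne : p (x : K) (d (y : K)) ≠ (x : K) := by
      intro heq
      have hle2 : d (x : K) ≤ d (y : K) := heq ▸ (hp (x : K) (d (y : K))).1.2
      exact absurd hlt (not_lt.mpr hle2)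
    have hplt : p (x : K) (d (y : K)) < (x : K) :=
      lt_of_le_of_ne (hp (x : K) (d (y : K))).1.1 hne
    rcases lt_or_eq_of_le hle with h | h
    · exfalso
      have hzG : p (x : K) (d (y : K)) ∈ G := hpG (x : K) x.2 (d (y : K))
      have hlt1 : y < (⟨p (x : K) (d (y : K)), hzG⟩ : ↥G) := Subtype.coe_lt_coe.mp h
      have hlt2 : (⟨p (x : K) (d (y : K)), hzG⟩ : ↥G) < x := Subtype.coe_lt_coe.mp hplt
      exact hy.2 hlt1 hlt2
    · exact h
  -- at most one cover has strictly smaller level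
  have lowlevel : ∀ y₁ y₂ : ↥G, y₁ ⋖ x → y₂ ⋖ x →
      d (y₁ : K) < d (x : K) → d (y₂ : K) < d (x : K) → y₁ = y₂ := by
    have key : ∀ y₁ y₂ : ↥G, y₁ ⋖ x → y₂ ⋖ x →
        d (y₁ : K) < d (x : K) → d (y₂ : K) < d (x : K) →
        d (y₁ : K) ≤ d (y₂ : K) → y₁ = y₂ := by
      intro y₁ y₂ h1 h2 hd1 hd2 hdle
      have e1 := lowcov y₁ h1 hd1
      have e2 := lowcov y₂ h2 hd2
      have hle : (y₁ : K) ≤ (y₂ : K) := by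
        rw [e1, e2]; exact pmono _ _ _ hdle
      exact eqcov y₁ y₂ h1 h2 (Subtype.coe_le_coe.mp hle)
    intro y₁ y₂ h1 h2 hd1 hd2
    rcases le_total (d (y₁ : K)) (d (y₂ : K)) with h | h
    · exact key y₁ y₂ h1 h2 hd1 hd2 h
    · exact (key y₂ y₁ h2 h1 hd2 hd1 h).symm
  -- every cover has level ≤ level of x
  have hdle : ∀ y : ↥G, y ⋖ x → d (y : K) ≤ d (x : K) :=
    fun y h => dmono _ _ (le_of_lt (Subtype.coe_lt_coe.mpr h.1))
  -- bound the cardinality by exhibiting two candidate covers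
  have hsub2 : ∀ u v : ↥G, {y : ↥G | y ⋖ x} ⊆ {u, v} → Set.ncard {y : ↥G | y ⋖ x} ≤ 2 := by
    intro u v hsub
    calc Set.ncard {y : ↥G | y ⋖ x} ≤ Set.ncard ({u, v} : Set ↥G) :=
          Set.ncard_le_ncard hsub ((Set.finite_singleton v).insert u)
      _ ≤ Set.ncard ({v} : Set ↥G) + 1 := Set.ncard_insert_le u {v}
      _ ≤ 2 := by rw [Set.ncard_singleton]
  by_cases h1 : ∃ y : ↥G, y ⋖ x ∧ d (y : K) = d (x : K)
  · obtain ⟨u, hu, hdu⟩ := h1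
    by_cases h2 : ∃ y : ↥G, y ⋖ x ∧ d (y : K) < d (x : K)
    · obtain ⟨v, hv, hdv⟩ := h2
      refine hsub2 u v ?_
      intro y hy
      rcases lt_or_eq_of_le (hdle y hy) with h | h
      · exact Or.inr (lowlevel y v hy hv h hdv)
      · exact Or.inl (samelevel y u hy hu h hdu)
    · refine hsub2 u u ?_
      intro y hy
      rcases lt_or_eq_of_le (hdle y hy) with h | h
      · exact absurd ⟨y, hy, h⟩ h2
      · exact Or.inl (samelevel y u hy hu h hdu)
  · by_cases h2 : ∃ y : ↥G, y ⋖ x ∧ d (y : K) < d (x : K)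
    · obtain ⟨v, hv, hdv⟩ := h2
      refine hsub2 v v ?_
      intro y hy
      rcases lt_or_eq_of_le (hdle y hy) with h | h
      · exact Or.inl (lowlevel y v hy hv h hdv)
      · exact absurd ⟨y, hy, h⟩ h1
    · refine hsub2 x x ?_
      intro y hy
      rcases lt_or_eq_of_le (hdle y hy) with h | h
      · exact absurd ⟨y, hy, h⟩ h2
      · exact absurd ⟨y, hy, h⟩ h1
end

section
/- In a simplified (κ,1)-morass, if α < β ≤ κ, ξ₀, ξ₁ < θ_α, f₀, f₁ ∈ F_{α,β}, and f₀(ξ₀) = f₁(ξ₁), then ξ₀ = ξ₁ and f₀ and f₁ agree on all ordinals below ξ₀. -/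
/-!
If `f₀ ξ₀ = f₁ ξ₁` for morass maps, then `ξ₀ = ξ₁` and `f₀, f₁` agree below `ξ₀`: call such a pair
of maps coherent. For `β = α + 1` this is a direct check on `F_{α,α+1} = {id, f_α}`, since
`f_α` fixes everything below `δ_α` and sends everything else to at least `θ_α`. Coherence is
preserved under composition with strictly increasing inner maps, and an injective map is
coherent with itself; so the successor case `α < γ + 1` follows from (P2) and the limit case
from the amalgamation (P4), by induction on `β`.
-/

/-- A simplified (κ,1)-morass, with morass maps represented as total functions on the
ordinals, order-embeddings of θ_α into θ_β on the relevant domains. -/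
structure SimplifiedMorass (κ : Cardinal.{0}) where
  θ : Ordinal → Ordinal
  F : Ordinal → Ordinal → Set (Ordinal → Ordinal)
  /-- (P0)(a) -/
  theta_zero : θ 0 = 2
  theta_pos : ∀ α < κ.ord, 0 < θ α
  theta_small : ∀ α < κ.ord, (θ α).card < κ
  theta_top : θ κ.ord = (Order.succ κ).ord
  /-- (P0)(b): members of F α β are order-embeddings from θ_α into θ_β -/
  embed : ∀ α β, α < β → β ≤ κ.ord → ∀ f ∈ F α β,
    (∀ ξ η, ξ < η → η < θ α → f ξ < f η) ∧ (∀ ξ < θ α, f ξ < θ β)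
  /-- (P1) -/
  P1 : ∀ α β, α < β → β < κ.ord → Cardinal.mk ↥(F α β) < Cardinal.lift.{1} κ
  /-- (P2) -/
  P2 : ∀ α β γ, α < β → β < γ → γ ≤ κ.ord →
    F α γ = {h | ∃ f ∈ F β γ, ∃ g ∈ F α β, h = f ∘ g}
  /-- (P3) -/
  P3 : ∀ α < κ.ord, ∃ δ : Ordinal, 0 < δ ∧ δ < θ α ∧
    θ (α + 1) = θ α + (θ α - δ) ∧
    F α (α + 1) = {id, fun ξ => if ξ < δ then ξ else θ α + (ξ - δ)}
  /-- (P4) -/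
  P4 : ∀ lam ≤ κ.ord, Order.IsSuccLimit lam → ∀ α₀ < lam, ∀ α₁ < lam,
    ∀ f₀ ∈ F α₀ lam, ∀ f₁ ∈ F α₁ lam,
    ∃ α, α₀ < α ∧ α₁ < α ∧ α < lam ∧ ∃ g ∈ F α lam,
      ∃ f₀' ∈ F α₀ α, ∃ f₁' ∈ F α₁ α, f₀ = g ∘ f₀' ∧ f₁ = g ∘ f₁'
  /-- (P5) -/
  P5 : ∀ α, 0 < α → α ≤ κ.ord → ∀ η < θ α,
    ∃ ξ, ξ < α ∧ ∃ f ∈ F ξ α, ∃ ζ < θ ξ, f ζ = η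

open Set

def CoherentBelow (θ : Ordinal) (f₀ f₁ : Ordinal → Ordinal) : Prop :=
  ∀ ξ₀ < θ, ∀ ξ₁ < θ, f₀ ξ₀ = f₁ ξ₁ → ξ₀ = ξ₁ ∧ ∀ ζ < ξ₀, f₀ ζ = f₁ ζ

namespace CoherentBelow

variable {θ θ' : Ordinal} {f f₀ f₁ g₀ g₁ : Ordinal → Ordinal}

theorem symm (h : CoherentBelow θ f₀ f₁) : CoherentBelow θ f₁ f₀ := by
  intro ξ₀ hξ₀ ξ₁ hξ₁ heq
  obtain ⟨rfl, hagree⟩ := h ξ₁ hξ₁ ξ₀ hξ₀ heq.symm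
  exact ⟨rfl, fun ζ hζ => (hagree ζ hζ).symm⟩

theorem of_injOn (hf : InjOn f (Iio θ)) : CoherentBelow θ f f :=
  fun _ hξ₀ _ hξ₁ heq => ⟨hf hξ₀ hξ₁ heq, fun _ _ => rfl⟩

theorem comp (hf : CoherentBelow θ' f₀ f₁) (hg : CoherentBelow θ g₀ g₁)
    (hg₀ : StrictMonoOn g₀ (Iio θ)) (hmaps₀ : MapsTo g₀ (Iio θ) (Iio θ'))
    (hmaps₁ : MapsTo g₁ (Iio θ) (Iio θ')) :
    CoherentBelow θ (f₀ ∘ g₀) (f₁ ∘ g₁) := by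
  intro ξ₀ hξ₀ ξ₁ hξ₁ heq
  obtain ⟨hg_eq, hf_agree⟩ := hf _ (hmaps₀ hξ₀) _ (hmaps₁ hξ₁) heq
  obtain ⟨rfl, hg_agree⟩ := hg ξ₀ hξ₀ ξ₁ hξ₁ hg_eq
  refine ⟨rfl, fun ζ hζ => ?_⟩
  have hlt : g₀ ζ < g₀ ξ₀ := hg₀ (hζ.trans hξ₀) hξ₀ hζ
  rw [Function.comp_apply, Function.comp_apply, hf_agree _ hlt, hg_agree ζ hζ]

end CoherentBelow

/-- The map `f_α` of (P3), for `θ = θ_α` and `δ = δ_α`. -/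
noncomputable def shiftAbove (θ δ : Ordinal) (ξ : Ordinal) : Ordinal :=
  if ξ < δ then ξ else θ + (ξ - δ)

section shiftAbove

variable {θ δ ξ : Ordinal}

theorem shiftAbove_of_lt (h : ξ < δ) : shiftAbove θ δ ξ = ξ := if_pos h

theorem le_shiftAbove_of_le (h : δ ≤ ξ) : θ ≤ shiftAbove θ δ ξ := by
  rw [shiftAbove, if_neg (not_lt.2 h)]
  exact le_self_add

theorem lt_of_shiftAbove_lt (h : shiftAbove θ δ ξ < θ) : ξ < δ :=
  not_le.1 fun hle => (le_shiftAbove_of_le hle).not_gt h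

theorem shiftAbove_injOn : InjOn (shiftAbove θ δ) (Iio θ) := by
  intro ξ₀ hξ₀ ξ₁ hξ₁ heq
  have hbelow {η₀ η₁} (hη₀ : η₀ < θ) (heq : shiftAbove θ δ η₀ = shiftAbove θ δ η₁)
      (h : η₀ < δ) : η₁ < δ :=
    lt_of_shiftAbove_lt (by rwa [← heq, shiftAbove_of_lt h])
  by_cases h₀ : ξ₀ < δ
  · have h₁ := hbelow hξ₀ heq h₀
    rwa [shiftAbove_of_lt h₀, shiftAbove_of_lt h₁] at heq
  have h₁ : ¬ξ₁ < δ := fun h₁ => h₀ (hbelow hξ₁ heq.symm h₁)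
  simp only [shiftAbove, if_neg h₀, if_neg h₁, add_right_inj] at heq
  rw [← Ordinal.add_sub_cancel_of_le (not_lt.1 h₀), heq,
    Ordinal.add_sub_cancel_of_le (not_lt.1 h₁)]

theorem coherentBelow_id_shiftAbove : CoherentBelow θ id (shiftAbove θ δ) := by
  intro ξ₀ hξ₀ ξ₁ _ heq
  rw [id_eq] at heq
  have hξ₁δ : ξ₁ < δ := lt_of_shiftAbove_lt (heq ▸ hξ₀)
  rw [shiftAbove_of_lt hξ₁δ] at heq
  subst heq
  exact ⟨rfl, fun ζ hζ => (shiftAbove_of_lt (hζ.trans hξ₁δ)).symm⟩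

theorem coherentBelow_of_mem_id_shiftAbove {f₀ f₁ : Ordinal → Ordinal}
    (hf₀ : f₀ ∈ ({id, shiftAbove θ δ} : Set _)) (hf₁ : f₁ ∈ ({id, shiftAbove θ δ} : Set _)) :
    CoherentBelow θ f₀ f₁ := by
  rcases hf₀ with rfl | rfl <;> rcases hf₁ with rfl | rfl
  · exact .of_injOn (injOn_id _)
  · exact coherentBelow_id_shiftAbove
  · exact coherentBelow_id_shiftAbove.symm
  · exact .of_injOn shiftAbove_injOn

end shiftAbove

namespace SimplifiedMorass

variable {κ : Cardinal.{0}} (M : SimplifiedMorass κ) {α β : Ordinal} {f f₀ f₁ : Ordinal → Ordinal}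

theorem strictMonoOn_of_mem (hαβ : α < β) (hβ : β ≤ κ.ord) (hf : f ∈ M.F α β) :
    StrictMonoOn f (Iio (M.θ α)) :=
  fun ξ _ η hη h => (M.embed α β hαβ hβ f hf).1 ξ η h hη

theorem mapsTo_of_mem (hαβ : α < β) (hβ : β ≤ κ.ord) (hf : f ∈ M.F α β) :
    MapsTo f (Iio (M.θ α)) (Iio (M.θ β)) :=
  fun ξ hξ => (M.embed α β hαβ hβ f hf).2 ξ hξ

theorem coherentBelow_of_mem_F_add_one (hα : α + 1 ≤ κ.ord)
    (hf₀ : f₀ ∈ M.F α (α + 1)) (hf₁ : f₁ ∈ M.F α (α + 1)) :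
    CoherentBelow (M.θ α) f₀ f₁ := by
  obtain ⟨δ, -, -, -, hF⟩ := M.P3 α ((lt_add_one α).trans_le hα)
  rw [hF] at hf₀ hf₁
  exact coherentBelow_of_mem_id_shiftAbove hf₀ hf₁

theorem coherentBelow_of_mem_F_succ {γ : Ordinal} (hαγ : α < γ) (hγ' : γ + 1 ≤ κ.ord)
    (hγ : ∀ {g₀ g₁}, g₀ ∈ M.F α γ → g₁ ∈ M.F α γ → CoherentBelow (M.θ α) g₀ g₁)
    (hf₀ : f₀ ∈ M.F α (γ + 1)) (hf₁ : f₁ ∈ M.F α (γ + 1)) :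
    CoherentBelow (M.θ α) f₀ f₁ := by
  have hγκ : γ ≤ κ.ord := (lt_add_one γ).le.trans hγ'
  rw [M.P2 α γ (γ + 1) hαγ (lt_add_one γ) hγ'] at hf₀ hf₁
  obtain ⟨F₀, hF₀, g₀, hg₀, rfl⟩ := hf₀
  obtain ⟨F₁, hF₁, g₁, hg₁, rfl⟩ := hf₁
  exact (M.coherentBelow_of_mem_F_add_one hγ' hF₀ hF₁).comp (hγ hg₀ hg₁)
    (M.strictMonoOn_of_mem hαγ hγκ hg₀) (M.mapsTo_of_mem hαγ hγκ hg₀)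
    (M.mapsTo_of_mem hαγ hγκ hg₁)

theorem coherentBelow_of_mem_F_limit (hβ : β ≤ κ.ord) (hlim : Order.IsSuccLimit β)
    (hαβ : α < β)
    (ih : ∀ α' < β, α < α' → ∀ {g₀ g₁}, g₀ ∈ M.F α α' → g₁ ∈ M.F α α' →
      CoherentBelow (M.θ α) g₀ g₁)
    (hf₀ : f₀ ∈ M.F α β) (hf₁ : f₁ ∈ M.F α β) :
    CoherentBelow (M.θ α) f₀ f₁ := by
  obtain ⟨α', hαα', -, hα'β, g, hg, g₀, hg₀, g₁, hg₁, rfl, rfl⟩ :=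
    M.P4 β hβ hlim α hαβ α hαβ f₀ hf₀ f₁ hf₁
  have hα' : α' ≤ κ.ord := hα'β.le.trans hβ
  exact (CoherentBelow.of_injOn (M.strictMonoOn_of_mem hα'β hβ hg).injOn).comp
    (ih α' hα'β hαα' hg₀ hg₁) (M.strictMonoOn_of_mem hαα' hα' hg₀)
    (M.mapsTo_of_mem hαα' hα' hg₀) (M.mapsTo_of_mem hαα' hα' hg₁)

theorem coherentBelow_of_mem_F (hαβ : α < β) (hβ : β ≤ κ.ord)
    (hf₀ : f₀ ∈ M.F α β) (hf₁ : f₁ ∈ M.F α β) :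
    CoherentBelow (M.θ α) f₀ f₁ := by
  induction β using WellFoundedLT.induction generalizing f₀ f₁ with
  | ind β ih =>
  rcases Ordinal.zero_or_succ_or_isSuccLimit β with rfl | ⟨γ, rfl⟩ | hlim
  · exact absurd hαβ not_lt_zero
  · rw [Order.succ_eq_add_one] at hαβ hβ hf₀ hf₁ ih
    rcases (Order.lt_add_one_iff.1 hαβ).eq_or_lt with rfl | hαγ
    · exact M.coherentBelow_of_mem_F_add_one hβ hf₀ hf₁
    · exact M.coherentBelow_of_mem_F_succ hαγ hβ
        (ih γ (lt_add_one γ) hαγ ((lt_add_one γ).le.trans hβ)) hf₀ hf₁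
  · exact M.coherentBelow_of_mem_F_limit hβ hlim hαβ
      (fun α' hα'β hαα' => ih α' hα'β hαα' (hα'β.le.trans hβ)) hf₀ hf₁

end SimplifiedMorass

theorem stmt_17_general (κ : Cardinal.{0}) (M : SimplifiedMorass κ)
    (α β : Ordinal) (hαβ : α < β) (hβ : β ≤ κ.ord)
    (ξ₀ ξ₁ : Ordinal) (hξ₀ : ξ₀ < M.θ α) (hξ₁ : ξ₁ < M.θ α)
    (f₀ f₁ : Ordinal → Ordinal) (hf₀ : f₀ ∈ M.F α β) (hf₁ : f₁ ∈ M.F α β)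
    (heq : f₀ ξ₀ = f₁ ξ₁) :
    ξ₀ = ξ₁ ∧ ∀ ζ < ξ₀, f₀ ζ = f₁ ζ :=
  M.coherentBelow_of_mem_F hαβ hβ hf₀ hf₁ ξ₀ hξ₀ ξ₁ hξ₁ heq

/-- In a simplified (κ,1)-morass, if α < β ≤ κ, ξ₀, ξ₁ < θ_α, f₀, f₁ ∈ F_{α,β} and
f₀(ξ₀) = f₁(ξ₁), then ξ₀ = ξ₁ and f₀, f₁ agree below ξ₀. -/
theorem stmt_17 (κ : Cardinal.{0}) (hκ : Cardinal.aleph0 ≤ κ) (M : SimplifiedMorass κ)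
    (α β : Ordinal) (hαβ : α < β) (hβ : β ≤ κ.ord)
    (ξ₀ ξ₁ : Ordinal) (hξ₀ : ξ₀ < M.θ α) (hξ₁ : ξ₁ < M.θ α)
    (f₀ f₁ : Ordinal → Ordinal) (hf₀ : f₀ ∈ M.F α β) (hf₁ : f₁ ∈ M.F α β)
    (heq : f₀ ξ₀ = f₁ ξ₁) :
    ξ₀ = ξ₁ ∧ ∀ ζ < ξ₀, f₀ ζ = f₁ ζ :=
  stmt_17_general κ M α β hαβ hβ ξ₀ ξ₁ hξ₀ hξ₁ f₀ f₁ hf₀ hf₁ heq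
end

section
/- There exists a countable 3-ladder K′ with an ideal K and a cofinal meet-subsemilattice F of K which is a 2-ladder, such that no cofinal meet-subsemilattice of K′ of breadth at most two contains F. -/
/-!
Take `K' = ℕ³` with a chain of caps `cap 0 < cap 1 < ⋯` added on top, `cap n` lying directly
above the box below `(n + 2, n + 2, n)`, so that `cap n` has at most two lower covers.
The ideal is `K = ℕ³`, and `F = {(a, b, a ⊓ b)} ≅ ℕ²` is a cofinal meet-subsemilattice of it.
A cofinal subset of `K'` must contain some cap `t = cap n`, and then for
`x = (n + 1, n + 2, n + 1)` and `y = (n + 2, n + 1, n + 1)` in `F` the four meets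
`x ⊓ y ⊓ t = (n + 1, n + 1, n)`, `x ⊓ y = (n + 1, n + 1, n + 1)`, `x ⊓ t = (n + 1, n + 2, n)`,
`y ⊓ t = (n + 2, n + 1, n)` are pairwise distinct: the cap cuts the diagonal coordinate.
-/

section LowerCovers

variable {α β : Type*}

lemma ncard_lowerCovers_le_one [LinearOrder α] (a : α) :
    {x | x ⋖ a}.ncard ≤ 1 := by
  have hsub : {x | x ⋖ a}.Subsingleton := fun _ hx _ hy => hx.unique_left hy
  exact (Set.ncard_le_one hsub.finite).2 hsub

lemma Prod.ncard_lowerCovers_le [PartialOrder α] [PartialOrder β] (a : α) (b : β) :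
    {x | x ⋖ (a, b)}.ncard ≤ {x | x ⋖ a}.ncard + {y | y ⋖ b}.ncard := by
  have hcov : {x | x ⋖ (a, b)} = (·, b) '' {x | x ⋖ a} ∪ (a, ·) '' {y | y ⋖ b} := by
    ext ⟨x, y⟩
    simp [Prod.covBy_iff, eq_comm]
  rw [hcov]
  refine (Set.ncard_union_le _ _).trans ?_
  rw [Set.ncard_image_of_injective _ (Prod.mk_left_injective b),
    Set.ncard_image_of_injective _ (Prod.mk_right_injective a)]

lemma OrderIso.ncard_lowerCovers [PartialOrder α] [PartialOrder β] (e : α ≃o β) (a : α) :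
    {y | y ⋖ e a}.ncard = {x | x ⋖ a}.ncard := by
  have : {y | y ⋖ e a} = e '' {x | x ⋖ a} := by
    ext y
    obtain ⟨x, rfl⟩ := e.surjective y
    simp [apply_covBy_apply_iff]
  rw [this, Set.ncard_image_of_injective _ e.injective]

end LowerCovers

structure CofinalChain (α : Type*) [Preorder α] where
  toFun : ℕ → α
  monotone' : Monotone toFun
  exists_le' : ∀ a, ∃ n, a ≤ toFun n

namespace CofinalChain

variable {α : Type*} [Preorder α]

instance : CoeFun (CofinalChain α) (fun _ => ℕ → α) := ⟨toFun⟩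

variable (c : CofinalChain α)

lemma monotone : Monotone c := c.monotone'

open Classical in
noncomputable def index (a : α) : ℕ := Nat.find (c.exists_le' a)

@[simp] lemma index_le_iff {a : α} {n : ℕ} : c.index a ≤ n ↔ a ≤ c n := by
  classical
  refine ⟨fun h => ?_, fun h => Nat.find_min' _ h⟩
  exact (Nat.find_spec (c.exists_le' a)).trans (c.monotone h)

lemma le_index (a : α) : a ≤ c (c.index a) := c.index_le_iff.1 le_rfl

end CofinalChain

inductive Capped {α : Type*} [Preorder α] (c : CofinalChain α) : Type _
  | base : α → Capped c
  | cap : ℕ → Capped c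

namespace Capped

variable {α : Type*}

section Preorder

variable [Preorder α] {c : CofinalChain α}

protected def le : Capped c → Capped c → Prop
  | base a, base b => a ≤ b
  | base a, cap n => a ≤ c n
  | cap _, base _ => False
  | cap m, cap n => m ≤ n

instance : LE (Capped c) := ⟨Capped.le⟩

@[simp] lemma base_le_base {a b : α} : base (c := c) a ≤ base b ↔ a ≤ b := Iff.rfl
@[simp] lemma base_le_cap {a : α} {n : ℕ} : base a ≤ cap (c := c) n ↔ a ≤ c n := Iff.rfl
@[simp] lemma not_cap_le_base {a : α} {n : ℕ} : ¬ cap (c := c) n ≤ base a := id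
@[simp] lemma cap_le_cap {m n : ℕ} : cap (c := c) m ≤ cap n ↔ m ≤ n := Iff.rfl

end Preorder

section PartialOrder

variable [PartialOrder α] {c : CofinalChain α}

instance : PartialOrder (Capped c) where
  le_refl x := by cases x <;> simp
  le_trans x y z := by
    cases x <;> cases y <;> cases z <;> simp
    · exact le_trans
    · exact le_trans
    · exact fun h h' => h.trans (c.monotone h')
    · exact le_trans
  le_antisymm x y := by
    cases x <;> cases y <;> simp
    · exact le_antisymm
    · exact le_antisymm

instance [OrderBot α] : OrderBot (Capped c) where
  bot := base ⊥
  bot_le := by rintro (a | n) <;> simp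

instance [Countable α] : Countable (Capped c) := by
  refine Function.Injective.countable (f := fun x : Capped c => match x with
    | base a => (Sum.inl a : α ⊕ ℕ)
    | cap n => Sum.inr n) ?_
  rintro (a | m) (b | n) h <;> simp_all

variable (c) in
def baseEmb : α ↪o Capped c := OrderEmbedding.ofMapLEIff base fun _ _ => base_le_base

@[simp] lemma baseEmb_apply (a : α) : baseEmb c a = base a := rfl

lemma isLowerSet_range_base : IsLowerSet (Set.range (base (c := c))) := by
  rintro _ (a | n) hle ⟨b, rfl⟩
  · exact ⟨a, rfl⟩
  · exact absurd hle not_cap_le_base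

lemma lowerCovers_base (a : α) :
    {x : Capped c | x ⋖ base a} = base '' {b | b ⋖ a} := by
  ext x
  constructor
  · intro hx
    obtain ⟨b, rfl⟩ := isLowerSet_range_base hx.le ⟨a, rfl⟩
    exact ⟨b, (isLowerSet_range_base.ordConnected.apply_covBy_apply_iff (baseEmb c)).1 hx, rfl⟩
  · rintro ⟨b, hb, rfl⟩
    exact (isLowerSet_range_base.ordConnected.apply_covBy_apply_iff (baseEmb c)).2 hb

lemma lowerCovers_cap_subset (n : ℕ) :
    {x : Capped c | x ⋖ cap n} ⊆ {cap (n - 1), base (c n)} := by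
  rintro (a | m) hx
  · have ha : a ≤ c n := base_le_cap.1 hx.le
    have := hx.eq_or_eq (c := base (c n)) (base_le_base.2 ha) (base_le_cap.2 le_rfl)
    simp_all [eq_comm]
  · have hmn : m < n := (cap_le_cap.1 hx.le).lt_of_ne (by rintro rfl; exact hx.ne rfl)
    have := hx.eq_or_eq (c := cap (n - 1)) (cap_le_cap.2 (by omega)) (cap_le_cap.2 (by omega))
    simp at this ⊢
    omega

lemma finite_Iic (hα : ∀ a : α, (Set.Iic a).Finite) (x : Capped c) : (Set.Iic x).Finite := by
  cases x with
  | base a =>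
    refine ((hα a).image base).subset ?_
    rintro (b | m) h
    · exact ⟨b, h, rfl⟩
    · exact absurd (Set.mem_Iic.1 h) not_cap_le_base
  | cap n =>
    refine (((hα (c n)).image base).union ((Set.finite_Iic (n : ℕ)).image cap)).subset ?_
    rintro (b | m) h
    · exact .inl ⟨b, h, rfl⟩
    · exact .inr ⟨m, h, rfl⟩

lemma ncard_lowerCovers_base (a : α) :
    {x : Capped c | x ⋖ base a}.ncard = {b | b ⋖ a}.ncard := by
  rw [lowerCovers_base, Set.ncard_image_of_injective _ fun _ _ => base.inj]

lemma ncard_lowerCovers_cap_le (n : ℕ) : {x : Capped c | x ⋖ cap n}.ncard ≤ 2 :=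
  (Set.ncard_le_ncard (lowerCovers_cap_subset n)).trans <|
    (Set.ncard_insert_le _ _).trans (by simp)

lemma exists_cap_mem_of_isCofinal {S : Set (Capped c)} (hS : IsCofinal S) :
    ∃ n, cap n ∈ S := by
  obtain ⟨(a | n), hy, hle⟩ := hS (cap 0)
  · exact absurd hle not_cap_le_base
  · exact ⟨n, hy⟩

end PartialOrder

variable [Lattice α] {c : CofinalChain α}

noncomputable instance : Lattice (Capped c) where
  inf
    | base a, base b => base (a ⊓ b)
    | base a, cap n => base (a ⊓ c n)
    | cap n, base a => base (c n ⊓ a)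
    | cap m, cap n => cap (min m n)
  sup
    | base a, base b => base (a ⊔ b)
    | base a, cap n => cap (max (c.index a) n)
    | cap n, base a => cap (max n (c.index a))
    | cap m, cap n => cap (max m n)
  inf_le_left x y := by cases x <;> cases y <;> simp
  inf_le_right x y := by cases x <;> cases y <;> simp
  le_inf := by
    rintro (a | l) (b | m) (d | n) <;> simp +contextual
    rcases le_total m n with h | h <;> simp +contextual [h]
  le_sup_left := by
    rintro (a | m) (b | n) <;> simp
    exact (c.le_index a).trans (c.monotone (le_max_left _ _))
  le_sup_right := by
    rintro (a | m) (b | n) <;> simp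
    exact (c.le_index b).trans (c.monotone (le_max_right _ _))
  sup_le := by
    rintro (a | l) (b | m) (d | n) <;> simp +contextual

@[simp] lemma base_inf_base (a b : α) : base (c := c) a ⊓ base b = base (a ⊓ b) := rfl
@[simp] lemma base_inf_cap (a : α) (n : ℕ) : base a ⊓ cap (c := c) n = base (a ⊓ c n) := rfl

end Capped

def HasBreadthLeTwo {L : Type*} [SemilatticeInf L] (S : Set L) : Prop :=
  ∀ x ∈ S, ∀ y ∈ S, ∀ z ∈ S, x ⊓ y ⊓ z = x ⊓ y ∨ x ⊓ y ⊓ z = x ⊓ z ∨ x ⊓ y ⊓ z = y ⊓ z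

def Prod.withInf {α : Type*} [SemilatticeInf α] : α × α ↪o α × α × α :=
  OrderEmbedding.ofMapLEIff (fun p => (p.1, p.2, p.1 ⊓ p.2)) fun p q => by
    simp only [Prod.le_def]
    exact ⟨fun h => ⟨h.1, h.2.1⟩, fun h => ⟨h.1, h.2, inf_le_inf h.1 h.2⟩⟩

@[simp] lemma Prod.withInf_apply {α : Type*} [SemilatticeInf α] (a b : α) :
    Prod.withInf (a, b) = (a, b, a ⊓ b) := rfl

lemma Prod.withInf_inf {α : Type*} [SemilatticeInf α] (p q : α × α) :
    Prod.withInf (p ⊓ q) = Prod.withInf p ⊓ Prod.withInf q := by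
  obtain ⟨a, b⟩ := p
  obtain ⟨a', b'⟩ := q
  simp [inf_inf_inf_comm]

def boxChain : CofinalChain (ℕ × ℕ × ℕ) where
  toFun n := (n + 2, n + 2, n)
  monotone' m n h := by simp [Prod.le_def, h]
  exists_le' v := ⟨v.1 + v.2.1 + v.2.2, by simp only [Prod.le_def]; omega⟩

open Capped

def diagonalEmb : ℕ × ℕ ↪o Capped boxChain := Prod.withInf.trans (baseEmb boxChain)

lemma ncard_lowerCovers_cube_le (v : ℕ × ℕ × ℕ) : {w | w ⋖ v}.ncard ≤ 3 :=
  (Prod.ncard_lowerCovers_le _ _).trans <| add_le_add (ncard_lowerCovers_le_one _) <|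
    (Prod.ncard_lowerCovers_le _ _).trans <|
      add_le_add (ncard_lowerCovers_le_one _) (ncard_lowerCovers_le_one _)

lemma ncard_lowerCovers_diagonal_le (x : Set.range diagonalEmb) : {y | y ⋖ x}.ncard ≤ 2 := by
  obtain ⟨p, rfl⟩ := diagonalEmb.orderIso.surjective x
  rw [OrderIso.ncard_lowerCovers]
  exact (Prod.ncard_lowerCovers_le _ _).trans <|
    add_le_add (ncard_lowerCovers_le_one _) (ncard_lowerCovers_le_one _)

lemma not_hasBreadthLeTwo_of_isCofinal {S : Set (Capped boxChain)}
    (hF : Set.range diagonalEmb ⊆ S) (hS : IsCofinal S) : ¬ HasBreadthLeTwo S := by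
  intro hbr
  obtain ⟨n, hn⟩ := exists_cap_mem_of_isCofinal hS
  have := hbr _ (hF ⟨(n + 1, n + 2), rfl⟩) _ (hF ⟨(n + 2, n + 1), rfl⟩) _ hn
  simp only [diagonalEmb, RelEmbedding.coe_trans, Function.comp_apply, baseEmb_apply,
    base_inf_base, base_inf_cap] at this
  simp [boxChain] at this

/-- There exists a countable 3-ladder K′ with an ideal K and a cofinal meet-subsemilattice
F of K which is a 2-ladder, such that no cofinal meet-subsemilattice of K′ of breadth at
most two contains F. -/
theorem stmt_18 :
    ∃ (K' : Type) (_ : Lattice K') (_ : OrderBot K'),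
      Countable K' ∧
      (∀ q : K', (Set.Iic q).Finite) ∧
      (∀ y : K', Set.ncard {x : K' | x ⋖ y} ≤ 3) ∧
      ∃ K : Set K', K.Nonempty ∧ DirectedOn (· ≤ ·) K ∧ IsLowerSet K ∧
        ∃ F : Set K', F ⊆ K ∧
          (∀ x ∈ K, ∃ y ∈ F, x ≤ y) ∧
          (∀ x ∈ F, ∀ y ∈ F, x ⊓ y ∈ F) ∧
          DirectedOn (· ≤ ·) F ∧
          (∀ x : ↥F, Set.ncard {y : ↥F | y ⋖ x} ≤ 2) ∧
          ¬ ∃ F' : Set K', F ⊆ F' ∧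
              (∀ x ∈ F', ∀ y ∈ F', x ⊓ y ∈ F') ∧
              (∀ x : K', ∃ y ∈ F', x ≤ y) ∧
              (∀ x ∈ F', ∀ y ∈ F', ∀ z ∈ F',
                x ⊓ y ⊓ z = x ⊓ y ∨ x ⊓ y ⊓ z = x ⊓ z ∨ x ⊓ y ⊓ z = y ⊓ z) := by
  refine ⟨Capped boxChain, inferInstance, inferInstance, inferInstance,
    finite_Iic fun _ => Set.finite_Iic _, ?_, Set.range base, ⟨base ⊥, ⊥, rfl⟩, ?_,
    isLowerSet_range_base, Set.range diagonalEmb, ?_, ?_, ?_, ?_,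
    ncard_lowerCovers_diagonal_le,
    fun ⟨_, hF, _, hcof, hbr⟩ => not_hasBreadthLeTwo_of_isCofinal hF hcof hbr⟩
  · rintro (v | n)
    · exact (ncard_lowerCovers_base v).trans_le (ncard_lowerCovers_cube_le v)
    · exact (ncard_lowerCovers_cap_le n).trans (by norm_num)
  · rintro _ ⟨a, rfl⟩ _ ⟨b, rfl⟩
    exact ⟨base (a ⊔ b), ⟨_, rfl⟩, base_le_base.2 le_sup_left, base_le_base.2 le_sup_right⟩
  · rintro _ ⟨p, rfl⟩
    exact ⟨_, rfl⟩
  · rintro _ ⟨⟨a, b, d⟩, rfl⟩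
    refine ⟨diagonalEmb (a ⊔ b ⊔ d, a ⊔ b ⊔ d), ⟨_, rfl⟩, ?_⟩
    simp [diagonalEmb, Prod.le_def]
  · rintro _ ⟨p, rfl⟩ _ ⟨q, rfl⟩
    exact ⟨p ⊓ q, by simp [diagonalEmb, Prod.withInf_inf]⟩
  · rintro _ ⟨p, rfl⟩ _ ⟨q, rfl⟩
    exact ⟨diagonalEmb (p ⊔ q), ⟨_, rfl⟩, diagonalEmb.monotone le_sup_left,
      diagonalEmb.monotone le_sup_right⟩
end

section
/- Let (K,∂) be a lower finite normed lattice. Define x ⊴ y iff x ∈ Proj(y). Then ⊴ is a partial ordering on K in which every principal ideal {x : x ⊴ y} is a finite chain. -/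
/-- In a lower finite normed lattice (K,∂), the relation x ⊴ y ⟺ x ∈ Proj(y)
(i.e. x = y_{(ξ)} for some ξ in the range of ∂) is a partial ordering on K in which every
principal ideal {x : x ⊴ y} is a finite chain. -/
theorem stmt_19 (K : Type*) [Lattice K] [OrderBot K]
    (hLF : ∀ q : K, (Set.Iic q).Finite)
    (d : K → Ordinal) (hd : ∀ x y : K, d (x ⊔ y) = max (d x) (d y)) (hd0 : d ⊥ = 0)
    (p : K → Ordinal → K)
    (hp : ∀ (x : K) (ξ : Ordinal), IsGreatest {z : K | z ≤ x ∧ d z ≤ ξ} (p x ξ)) :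
    ∀ r : K → K → Prop, (∀ x y : K, r x y ↔ ∃ ξ ∈ Set.range d, x = p y ξ) →
      (∀ x : K, r x x) ∧
      (∀ x y : K, r x y → r y x → x = y) ∧
      (∀ x y z : K, r x y → r y z → r x z) ∧
      (∀ y : K, {x : K | r x y}.Finite ∧
        ∀ x₁ ∈ {x : K | r x y}, ∀ x₂ ∈ {x : K | r x y}, r x₁ x₂ ∨ r x₂ x₁) := by
  intro r hr
  have hple : ∀ y ξ, p y ξ ≤ y := fun y ξ => (hp y ξ).1.1
  have hpd : ∀ y ξ, d (p y ξ) ≤ ξ := fun y ξ => (hp y ξ).1.2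
  have hpmax : ∀ y ξ z, z ≤ y → d z ≤ ξ → z ≤ p y ξ :=
    fun y ξ z h1 h2 => (hp y ξ).2 ⟨h1, h2⟩
  have hdmono : ∀ x y : K, x ≤ y → d x ≤ d y := by
    intro x y hxy
    have : d y = max (d x) (d y) := by rw [← hd, sup_eq_right.mpr hxy]
    rw [this]; exact le_max_left _ _
  -- p y (d x) = x when x = p y ξ for some ξ
  have hself : ∀ y ξ, p y (d (p y ξ)) = p y ξ := by
    intro y ξ
    refine le_antisymm ?_ (hpmax _ _ _ (hple y ξ) le_rfl)
    exact hpmax _ _ _ (hple _ _) ((hpd y (d (p y ξ))).trans (hpd y ξ))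
  have hrle : ∀ x y, r x y → x ≤ y := by
    intro x y h
    obtain ⟨ξ, -, rfl⟩ := (hr x y).mp h
    exact hple y ξ
  -- r x y iff x ≤ y and p y (d x) = x
  have hrchar : ∀ x y, r x y ↔ (x ≤ y ∧ p y (d x) = x) := by
    intro x y
    constructor
    · intro h
      obtain ⟨ξ, -, rfl⟩ := (hr x y).mp h
      exact ⟨hple y ξ, hself y ξ⟩
    · rintro ⟨h1, h2⟩
      exact (hr x y).mpr ⟨d x, ⟨x, rfl⟩, h2.symm⟩
  refine ⟨?_, ?_, ?_, ?_⟩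
  · intro x
    exact (hrchar x x).mpr ⟨le_rfl, le_antisymm (hple _ _) (hpmax _ _ _ le_rfl le_rfl)⟩
  · intro x y h1 h2
    exact le_antisymm (hrle _ _ h1) (hrle _ _ h2)
  · intro x y z h1 h2
    obtain ⟨hxy, hx⟩ := (hrchar x y).mp h1
    obtain ⟨hyz, hy⟩ := (hrchar y z).mp h2
    refine (hrchar x z).mpr ⟨hxy.trans hyz, le_antisymm ?_ (hpmax _ _ _ (hxy.trans hyz) le_rfl)⟩
    -- p z (d x) ≤ x : since p z (d x) ≤ z, d ≤ d x ≤ d y, get ≤ p z (d y) = y, then ≤ p y (d x) = x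
    have h3 : p z (d x) ≤ y := by
      rw [← hy]
      exact hpmax _ _ _ (hple _ _) ((hpd _ _).trans (hdmono _ _ hxy))
    exact (hpmax _ _ _ h3 (hpd _ _)).trans hx.le
  · intro y
    constructor
    · exact (hLF y).subset (fun x hx => hrle _ _ hx)
    · intro x₁ h1 x₂ h2
      obtain ⟨ξ₁, -, rfl⟩ := (hr x₁ y).mp h1
      obtain ⟨ξ₂, -, rfl⟩ := (hr x₂ y).mp h2
      rcases le_total ξ₁ ξ₂ with h | h
      · left
        have hle : p y ξ₁ ≤ p y ξ₂ := hpmax _ _ _ (hple _ _) ((hpd _ _).trans h)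
        refine (hrchar _ _).mpr ⟨hle, le_antisymm ?_ (hpmax _ _ _ hle le_rfl)⟩
        conv_rhs => rw [← hself y ξ₁]
        exact hpmax _ _ _ ((hple _ _).trans (hple _ _)) (hpd _ _)
      · right
        have hle : p y ξ₂ ≤ p y ξ₁ := hpmax _ _ _ (hple _ _) ((hpd _ _).trans h)
        refine (hrchar _ _).mpr ⟨hle, le_antisymm ?_ (hpmax _ _ _ hle le_rfl)⟩
        conv_rhs => rw [← hself y ξ₂]
        exact hpmax _ _ _ ((hple _ _).trans (hple _ _)) (hpd _ _)
end
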